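/- arXiv:2311.00080 — 7 statements merged into one kernel-verified Lean document; each statement's English description precedes it below -/
import Mathlib

section
/- Let G be a group such that the second homology group H₂(G) (with trivial integer coefficients) is finite and the abelianization G_ab is a free abelian group. Then G is circularly orderable if and only if G is left-orderable. -/
/-!
A left order gives a circular order: the orientation of triples. Conversely, cutting a
left-invariant circular order at `1` gives a linear order with least element `1` whose
orientation cocycle is still left-invariant. Recording whether the step from `u` to `u * g`
wraps past `1` gives a 2-cocycle `euler`, and the lexicographic order on the central extension
`ℤ → E → G` it defines is left-invariant.

When `H₂(G)` is finite and `G_ab` is free, every central extension of `G` by `ℤ` splits. Lift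
`G = F / R` to `E`: relators land in the central `ℤ`, giving a homomorphism `R → ℤ` that kills
`[F, R]`, hence kills `R ∩ [F, F]` because `(R ∩ [F, F]) / [F, R] = H₂(G)` is finite. It
therefore factors through `R[F, F] / [F, F]`, which is a direct summand of `F_ab` with free
quotient `G_ab`, so it extends to all of `F`; correcting the lift by this extension kills `R`.
Hence `G` embeds into the left-orderable group `E`.
-/

universe u

/-- A group is left-orderable if it admits a left-invariant strict total order. -/
def IsLeftOrderable (G : Type u) [Group G] : Prop :=
  ∃ r : G → G → Prop, IsStrictTotalOrder G r ∧ ∀ h a b : G, r a b → r (h * a) (h * b)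

/-- A group is circularly orderable if it admits a left-invariant circular order cocycle. -/
def IsCircularlyOrderable (G : Type u) [Group G] : Prop :=
  ∃ c : G → G → G → ℤ,
    (∀ g₁ g₂ g₃ : G, c g₁ g₂ g₃ = -1 ∨ c g₁ g₂ g₃ = 0 ∨ c g₁ g₂ g₃ = 1) ∧
    (∀ g₁ g₂ g₃ : G, c g₁ g₂ g₃ = 0 ↔ g₁ = g₂ ∨ g₁ = g₃ ∨ g₂ = g₃) ∧
    (∀ g₁ g₂ g₃ g₄ : G, c g₂ g₃ g₄ - c g₁ g₃ g₄ + c g₁ g₂ g₄ - c g₁ g₂ g₃ = 0) ∧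
    (∀ h g₁ g₂ g₃ : G, c g₁ g₂ g₃ = c (h * g₁) (h * g₂) (h * g₃))

/-- The kernel of the canonical presentation `FreeGroup G → G`. -/
def presKernel (G : Type u) [Group G] : Subgroup (FreeGroup G) :=
  (FreeGroup.lift (id : G → G)).ker

instance (G : Type u) [Group G] : (presKernel G).Normal :=
  MonoidHom.normal_ker _

/-- The second homology group `H₂(G; ℤ)` computed via Hopf's formula:
`H₂(G) = (R ⊓ [F, F]) / [F, R]` for the canonical free presentation `G = F/R`,
`F = FreeGroup G`. -/
def H2 (G : Type u) [Group G] : Type u :=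
  ↥(presKernel G ⊓ commutator (FreeGroup G)) ⧸
    ((⁅(⊤ : Subgroup (FreeGroup G)), presKernel G⁆).subgroupOf
      (presKernel G ⊓ commutator (FreeGroup G)))

noncomputable instance (G : Type u) [Group G] : Group (H2 G) := by
  unfold H2; infer_instance

theorem IsLeftOrderable.of_injective {G H : Type*} [Group G] [Group H] (s : G →* H)
    (hs : Function.Injective s) (hH : IsLeftOrderable H) : IsLeftOrderable G := by
  obtain ⟨r, hr, hmul⟩ := hH
  refine ⟨fun a b => r (s a) (s b), (RelEmbedding.preimage ⟨s, hs⟩ r).isStrictTotalOrder, ?_⟩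
  intro h a b hab
  simpa only [map_mul] using hmul (s h) _ _ hab

section LinearOrder
variable {α : Type*} [LinearOrder α]

def orderSign (a b : α) : ℤ := if a < b then 1 else if b < a then -1 else 0

theorem orderSign_self (a : α) : orderSign a a = 0 := by simp [orderSign]

theorem orderSign_swap (a b : α) : orderSign b a = -orderSign a b := by
  unfold orderSign; split_ifs <;> first | rfl | (exfalso; order)

def orientation (a b d : α) : ℤ := orderSign a b + orderSign b d - orderSign a d

theorem orientation_mem (a b d : α) :
    orientation a b d = -1 ∨ orientation a b d = 0 ∨ orientation a b d = 1 := by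
  unfold orientation orderSign
  split_ifs <;> first | omega | (exfalso; order)

theorem orientation_eq_zero_iff (a b d : α) :
    orientation a b d = 0 ↔ a = b ∨ a = d ∨ b = d := by
  unfold orientation orderSign
  split_ifs <;> constructor <;> intro h <;>
    first | omega | (exfalso; order) | (rcases h with rfl | rfl | rfl <;> order)

theorem orientation_eq_one_of_lt_of_lt {a b d : α} (hab : a < b) (hbd : b < d) :
    orientation a b d = 1 := by
  simp [orientation, orderSign, hab, hbd, hab.trans hbd]

theorem orientation_cocycle (a b d e : α) :
    orientation b d e - orientation a d e + orientation a b e - orientation a b d = 0 := by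
  unfold orientation; ring

/-- Read cyclically from `x`, the elements below `x` come last; `wind x a = 1` says `a` is one
of them. -/
def wind (x a : α) : ℤ := if a < x then 1 else 0

theorem toLex_wind_lt_of_orientation (x a b : α) (h : (a = x ∧ b ≠ x) ∨ orientation x a b = 1) :
    toLex (wind x a, a) < toLex (wind x b, b) := by
  rw [Prod.Lex.toLex_lt_toLex]
  unfold wind orientation orderSign at *
  rcases h with ⟨rfl, hb⟩ | h
  · split_ifs <;> first | omega | (right; constructor <;> first | omega | order)
  · split_ifs at h ⊢ <;> first | omega | (right; constructor <;> first | omega | order)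

end LinearOrder

theorem IsLeftOrderable.isCircularlyOrderable {G : Type*} [Group G] (hG : IsLeftOrderable G) :
    IsCircularlyOrderable G := by
  classical
  obtain ⟨r, hr, hmul⟩ := hG
  let _ := linearOrderOfSTO r
  have hsign (h a b : G) : orderSign (h * a) (h * b) = orderSign a b := by
    have hlt (x y : G) : h * x < h * y ↔ x < y :=
      ⟨fun hxy => (by simpa using hmul h⁻¹ _ _ hxy : r x y), hmul h x y⟩
    simp only [orderSign, hlt]
  refine ⟨orientation, orientation_mem, orientation_eq_zero_iff, orientation_cocycle, ?_⟩
  intro h a b d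
  simp only [orientation, hsign]

structure LeftCircularOrder (G : Type*) [Group G] where
  c : G → G → G → ℤ
  c_mem : ∀ g₁ g₂ g₃ : G, c g₁ g₂ g₃ = -1 ∨ c g₁ g₂ g₃ = 0 ∨ c g₁ g₂ g₃ = 1
  c_eq_zero_iff : ∀ g₁ g₂ g₃ : G, c g₁ g₂ g₃ = 0 ↔ g₁ = g₂ ∨ g₁ = g₃ ∨ g₂ = g₃
  cocycle : ∀ g₁ g₂ g₃ g₄ : G, c g₂ g₃ g₄ - c g₁ g₃ g₄ + c g₁ g₂ g₄ - c g₁ g₂ g₃ = 0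
  c_mul_left : ∀ h g₁ g₂ g₃ : G, c g₁ g₂ g₃ = c (h * g₁) (h * g₂) (h * g₃)

namespace LeftCircularOrder

variable {G : Type*} [Group G] (o : LeftCircularOrder G)

theorem c_le_one (a b d : G) : o.c a b d ≤ 1 := by
  rcases o.c_mem a b d with h | h | h <;> omega

theorem c_eq_zero_of_eq {a b d : G} (h : a = b ∨ a = d ∨ b = d) : o.c a b d = 0 :=
  (o.c_eq_zero_iff a b d).mpr h

theorem c_swap (a b d : G) : o.c a d b = -o.c a b d := by
  have := o.cocycle a b d b
  have h₁ : o.c b d b = 0 := o.c_eq_zero_of_eq (by tauto)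
  have h₂ : o.c a b b = 0 := o.c_eq_zero_of_eq (by tauto)
  linarith

/-- The linear order obtained by cutting the circle at `1`. -/
def baseLt (a b : G) : Prop := (a = 1 ∧ b ≠ 1) ∨ o.c 1 a b = 1

theorem baseLt_iff_of_ne_one {a : G} (b : G) (ha : a ≠ 1) : o.baseLt a b ↔ o.c 1 a b = 1 := by
  simp [baseLt, ha]

theorem baseLt_irrefl (a : G) : ¬ o.baseLt a a := by
  have : o.c 1 a a = 0 := o.c_eq_zero_of_eq (by tauto)
  rintro (⟨rfl, h⟩ | h) <;> simp_all

theorem baseLt_trans {a b d : G} (hab : o.baseLt a b) (hbd : o.baseLt b d) : o.baseLt a d := by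
  rcases hab with ⟨rfl, hb⟩ | hab
  · rcases hbd with ⟨rfl, -⟩ | hbd
    · exact absurd rfl hb
    · exact .inl ⟨rfl, by rintro rfl; simp [o.c_eq_zero_of_eq (.inr (.inl rfl))] at hbd⟩
  · have hb : b ≠ 1 := by rintro rfl; simp [o.c_eq_zero_of_eq (.inr (.inl rfl))] at hab
    rw [o.baseLt_iff_of_ne_one d hb] at hbd
    right
    have := o.cocycle 1 a b d
    linarith [o.c_le_one a b d, o.c_le_one 1 a d]

theorem baseLt_trichotomous (a b : G) : o.baseLt a b ∨ a = b ∨ o.baseLt b a := by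
  by_cases hab : a = b
  · exact .inr (.inl hab)
  by_cases ha : a = 1
  · exact .inl (.inl ⟨ha, ha ▸ Ne.symm hab⟩)
  by_cases hb : b = 1
  · exact .inr (.inr (.inl ⟨hb, hb ▸ hab⟩))
  rw [o.baseLt_iff_of_ne_one b ha, o.baseLt_iff_of_ne_one a hb, o.c_swap 1 a b]
  have := (o.c_eq_zero_iff 1 a b).not.mpr (by tauto)
  rcases o.c_mem 1 a b with h | h | h
  · exact .inr (.inr (by omega))
  · exact absurd h this
  · exact .inl h

instance isStrictTotalOrder_baseLt : IsStrictTotalOrder G o.baseLt where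
  irrefl := o.baseLt_irrefl
  trans _ _ _ := o.baseLt_trans
  trichotomous a b hab hba := (o.baseLt_trichotomous a b).elim (absurd · hab)
    (·.elim id (absurd · hba))

variable [LinearOrder G] (hlt : ∀ a b : G, a < b ↔ o.baseLt a b)
include hlt

theorem one_le (a : G) : 1 ≤ a := by
  refine not_lt.mp fun h => ?_
  rcases (hlt a 1).mp h with ⟨-, h⟩ | h
  · exact h rfl
  · simp [o.c_eq_zero_of_eq (.inr (.inl rfl))] at h

theorem c_one_eq (a b : G) : o.c 1 a b = orderSign a b + orderSign 1 a - orderSign 1 b := by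
  have h1 := o.one_le hlt
  rcases eq_or_ne a 1 with rfl | ha
  · rw [o.c_eq_zero_of_eq (.inl rfl), orderSign_self]; ring
  rcases eq_or_ne b 1 with rfl | hb
  · rw [o.c_eq_zero_of_eq (.inr (.inl rfl)), orderSign_swap, orderSign_self]; ring
  have ha' : 1 < a := lt_of_le_of_ne (h1 a) (Ne.symm ha)
  have hb' : 1 < b := lt_of_le_of_ne (h1 b) (Ne.symm hb)
  rcases lt_trichotomy a b with hab | rfl | hab
  · simp [orderSign, hab, ha', hb', ← o.baseLt_iff_of_ne_one b ha, ← hlt]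
  · rw [o.c_eq_zero_of_eq (.inr (.inr rfl)), orderSign_self]; ring
  · have hba := (o.baseLt_iff_of_ne_one a hb).mp ((hlt b a).mp hab)
    have hswap := o.c_swap 1 a b
    simp only [orderSign, if_neg hab.not_gt, if_pos hab, if_pos ha', if_pos hb']
    omega

theorem c_eq_orientation (a b d : G) : o.c a b d = orientation a b d := by
  have := o.cocycle 1 a b d
  rw [o.c_one_eq hlt, o.c_one_eq hlt, o.c_one_eq hlt] at this
  unfold orientation
  linarith

end LeftCircularOrder

theorem IsCircularlyOrderable.exists_linearOrder {G : Type*} [Group G]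
    (hG : IsCircularlyOrderable G) :
    ∃ _ : LinearOrder G, (∀ a : G, 1 ≤ a) ∧
      ∀ u a b d : G, orientation (u * a) (u * b) (u * d) = orientation a b d := by
  classical
  obtain ⟨c, c_mem, c_eq_zero_iff, cocycle, c_mul_left⟩ := hG
  let o : LeftCircularOrder G := ⟨c, c_mem, c_eq_zero_iff, cocycle, c_mul_left⟩
  let _ := linearOrderOfSTO o.baseLt
  have hlt (a b : G) : a < b ↔ o.baseLt a b := Iff.rfl
  refine ⟨‹_›, o.one_le hlt, fun u a b d => ?_⟩
  rw [← o.c_eq_orientation hlt, ← o.c_eq_orientation hlt, ← o.c_mul_left]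

structure NormalizedCocycle (G : Type*) [Group G] where
  toFun : G → G → ℤ
  map_one_left : ∀ g, toFun 1 g = 0
  map_one_right : ∀ g, toFun g 1 = 0
  cocycle : ∀ g h k, toFun g h + toFun (g * h) k = toFun h k + toFun g (h * k)

namespace NormalizedCocycle

variable {G : Type*} [Group G]

instance : CoeFun (NormalizedCocycle G) fun _ => G → G → ℤ := ⟨toFun⟩

theorem apply_inv_self (f : NormalizedCocycle G) (g : G) : f g⁻¹ g = f g g⁻¹ := by
  have := f.cocycle g g⁻¹ g
  rw [mul_inv_cancel, inv_mul_cancel, f.map_one_left, f.map_one_right] at this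
  linarith

end NormalizedCocycle

@[ext]
structure CentralExt {G : Type*} [Group G] (f : NormalizedCocycle G) where
  m : ℤ
  g : G

namespace CentralExt

variable {G : Type*} [Group G] {f : NormalizedCocycle G}

instance : Mul (CentralExt f) := ⟨fun x y => ⟨x.m + y.m + f x.g y.g, x.g * y.g⟩⟩
instance : One (CentralExt f) := ⟨⟨0, 1⟩⟩
instance : Inv (CentralExt f) := ⟨fun x => ⟨-x.m - f x.g x.g⁻¹, x.g⁻¹⟩⟩

@[simp] theorem mul_m (x y : CentralExt f) : (x * y).m = x.m + y.m + f x.g y.g := rfl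
@[simp] theorem mul_g (x y : CentralExt f) : (x * y).g = x.g * y.g := rfl
@[simp] theorem one_m : (1 : CentralExt f).m = 0 := rfl
@[simp] theorem one_g : (1 : CentralExt f).g = 1 := rfl
@[simp] theorem inv_m (x : CentralExt f) : x⁻¹.m = -x.m - f x.g x.g⁻¹ := rfl
@[simp] theorem inv_g (x : CentralExt f) : x⁻¹.g = x.g⁻¹ := rfl

instance : Group (CentralExt f) :=
  Group.ofLeftAxioms
    (fun x y z => by
      ext
      · simp only [mul_m, mul_g]; linarith [f.cocycle x.g y.g z.g]
      · exact mul_assoc ..)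
    (fun x => by ext <;> simp [f.map_one_left])
    (fun x => by
      ext
      · simp only [mul_m, inv_m, inv_g, f.apply_inv_self, one_m]; ring
      · exact inv_mul_cancel x.g)

def proj : CentralExt f →* G where
  toFun := g
  map_one' := rfl
  map_mul' _ _ := rfl

end CentralExt

section Euler

variable {G : Type*} [Group G] [LinearOrder G]

def euler (u g : G) : ℤ := wind u (u * g)

variable (hbot : ∀ a : G, 1 ≤ a)
include hbot

theorem two_mul_euler (u g : G) : 2 * euler u g = orderSign 1 g - orderSign u (u * g) := by
  unfold euler wind orderSign
  rcases (hbot g).eq_or_lt with rfl | hg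
  · simp
  have hug : u * g ≠ u := by simpa using hg.ne'
  split_ifs <;> first | omega | (exfalso; order)

variable (hinv : ∀ u a b d : G, orientation (u * a) (u * b) (u * d) = orientation a b d)
include hinv

theorem euler_cocycle (g h k : G) :
    euler g h + euler (g * h) k = euler h k + euler g (h * k) := by
  have e₁ := two_mul_euler hbot g h
  have e₂ := two_mul_euler hbot (g * h) k
  have e₃ := two_mul_euler hbot h k
  have e₄ := two_mul_euler hbot g (h * k)
  have hi := hinv g 1 h (h * k)
  rw [mul_one, ← mul_assoc] at hi
  rw [← mul_assoc] at e₄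
  unfold orientation at hi
  linarith

def eulerCocycle : NormalizedCocycle G where
  toFun := euler
  map_one_left g := by simp [euler, wind, (hbot g).not_gt]
  map_one_right g := by simp [euler, wind]
  cocycle := euler_cocycle hbot hinv

theorem toLex_add_euler_lt (u : G) {m n : ℤ} {g h : G} (hlt : toLex (m, g) < toLex (n, h)) :
    toLex (m + euler u g, u * g) < toLex (n + euler u h, u * h) := by
  rw [Prod.Lex.toLex_lt_toLex] at hlt ⊢
  rcases hlt with hmn | ⟨rfl, hgh⟩
  · unfold euler wind
    split_ifs with hg hh
    · exact .inl (by omega)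
    · rcases (show m + 1 < n ∨ m + 1 = n by omega) with hmn' | hmn'
      · exact .inl (by omega)
      · exact .inr ⟨by omega, hg.trans_le (not_lt.mp hh)⟩
    · exact .inl (by omega)
    · exact .inl (by omega)
  · have hcut : (u * g = u ∧ u * h ≠ u) ∨ orientation u (u * g) (u * h) = 1 := by
      have hi := hinv u 1 g h
      rw [mul_one] at hi
      rw [hi, mul_eq_left, Ne, mul_eq_left]
      rcases (hbot g).eq_or_lt with rfl | hg
      · exact .inl ⟨rfl, hgh.ne'⟩
      · exact .inr (orientation_eq_one_of_lt_of_lt hg hgh)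
    have hwind := toLex_wind_lt_of_orientation u (u * g) (u * h) hcut
    rw [Prod.Lex.toLex_lt_toLex] at hwind
    rcases hwind with hwind | ⟨hwind, hugh⟩
    · exact .inl (by unfold euler; omega)
    · exact .inr ⟨by unfold euler; omega, hugh⟩

end Euler

theorem isLeftOrderable_centralExt_euler {G : Type*} [Group G] [LinearOrder G]
    (hbot : ∀ a : G, 1 ≤ a)
    (hinv : ∀ u a b d : G, orientation (u * a) (u * b) (u * d) = orientation a b d) :
    IsLeftOrderable (CentralExt (eulerCocycle hbot hinv)) := by
  let lex : CentralExt (eulerCocycle hbot hinv) ↪ ℤ ×ₗ G :=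
    ⟨fun x => toLex (x.m, x.g), fun x y h => by simpa [CentralExt.ext_iff] using h⟩
  refine ⟨fun x y => lex x < lex y, (RelEmbedding.preimage lex (· < ·)).isStrictTotalOrder, ?_⟩
  intro u x y hxy
  have hxy' : toLex (u.m + x.m, x.g) < toLex (u.m + y.m, y.g) := by
    change toLex (x.m, x.g) < toLex (y.m, y.g) at hxy
    rw [Prod.Lex.toLex_lt_toLex] at hxy ⊢
    exact hxy.imp (by omega) (And.imp_left (by omega))
  exact toLex_add_euler_lt hbot hinv u.g hxy'

theorem exists_pow_mem_commutator_of_finite_H2 {G : Type*} [Group G] (hH2 : Finite (H2 G))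
    {w : FreeGroup G} (hw : w ∈ presKernel G ⊓ commutator (FreeGroup G)) :
    ∃ n : ℕ, 0 < n ∧ w ^ n ∈ ⁅(⊤ : Subgroup (FreeGroup G)), presKernel G⁆ := by
  let K := presKernel G ⊓ commutator (FreeGroup G)
  let x : K := ⟨w, hw⟩
  have : Finite (K ⧸ ⁅(⊤ : Subgroup (FreeGroup G)), presKernel G⁆.subgroupOf K) := hH2
  obtain ⟨n, hn, hxn⟩ := isOfFinOrder_iff_pow_eq_one.mp (isOfFinOrder_of_finite
    (QuotientGroup.mk x : K ⧸ ⁅(⊤ : Subgroup (FreeGroup G)), presKernel G⁆.subgroupOf K))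
  refine ⟨n, hn, ?_⟩
  rw [← QuotientGroup.mk_pow, QuotientGroup.eq_one_iff, Subgroup.mem_subgroupOf] at hxn
  simpa [x] using hxn

theorem exists_rightInverse_of_free {A B ι : Type*} [CommGroup A] [CommGroup B]
    (e : Additive B ≃+ FreeAbelianGroup ι) (q : A →* B) (hq : Function.Surjective q) :
    ∃ s : B →* A, ∀ y, q (s y) = y := by
  let s₀ : FreeAbelianGroup ι →+ Additive A :=
    FreeAbelianGroup.lift fun i => .ofMul (Function.surjInv hq (e.symm (.of i)).toMul)
  have hs₀ : (MonoidHom.toAdditive q).comp s₀ = e.symm.toAddMonoidHom :=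
    FreeAbelianGroup.lift_ext _ _ fun i => by
      simp [s₀, FreeAbelianGroup.lift_apply_of, Function.surjInv_eq hq]
  refine ⟨MonoidHom.toAdditive.symm (s₀.comp e.toAddMonoidHom), fun y => ?_⟩
  simpa using DFunLike.congr_fun hs₀ (e (.ofMul y))

theorem Abelianization.ker_map_of_surjective {F G : Type*} [Group F] [Group G] (π : F →* G)
    (hπ : Function.Surjective π) : (Abelianization.map π).ker = π.ker.map Abelianization.of := by
  have hcomm : (commutator F).map π = commutator G := by
    rw [commutator_def, commutator_def, Subgroup.map_commutator,
      Subgroup.map_top_of_surjective π hπ]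
  ext x
  constructor
  · obtain ⟨w, rfl⟩ := QuotientGroup.mk_surjective x
    intro hw
    have hπw : π w ∈ (commutator F).map π := by
      rw [hcomm, ← ker_of G]
      exact hw
    obtain ⟨c, hc, hcw⟩ := hπw
    refine ⟨w * c⁻¹, by simp [hcw], ?_⟩
    rw [map_mul, map_inv, (ker_of F ▸ hc : c ∈ of.ker), inv_one, mul_one]
    rfl
  · rintro ⟨r, hr, rfl⟩
    simp_all [Abelianization.map_of]

theorem MonoidHom.exists_extension_of_free_abelianization {F G M ι : Type*} [Group F] [Group G]
    [CommGroup M] (e : Additive (Abelianization G) ≃+ FreeAbelianGroup ι) (π : F →* G)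
    (hπ : Function.Surjective π) (ψ : π.ker →* M)
    (hψ : ∀ r : π.ker, (r : F) ∈ commutator F → ψ r = 1) :
    ∃ Φ : F →* M, ∀ r : π.ker, Φ r = ψ r := by
  let q := Abelianization.map π
  have hq : Function.Surjective q := by
    intro y
    obtain ⟨x, rfl⟩ := QuotientGroup.mk_surjective y
    obtain ⟨w, rfl⟩ := hπ x
    exact ⟨.of w, Abelianization.map_of π w⟩
  obtain ⟨s, hs⟩ := exists_rightInverse_of_free e q hq
  let ρ : π.ker →* q.ker := (Abelianization.of.comp π.ker.subtype).codRestrict q.ker fun r => by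
    simp [q, MonoidHom.mem_ker.mp r.2]
  have hρ : Function.Surjective ρ := by
    rintro ⟨x, hx⟩
    rw [Abelianization.ker_map_of_surjective π hπ] at hx
    obtain ⟨r, hr, rfl⟩ := hx
    exact ⟨⟨r, hr⟩, rfl⟩
  have hρψ : ρ.ker ≤ ψ.ker := fun r hr => hψ r <| by
    rw [← Abelianization.ker_of]
    exact congrArg Subtype.val hr
  let p : Abelianization F →* q.ker :=
    (MonoidHom.id _ / s.comp q).codRestrict q.ker fun x => by simp [hs]
  refine ⟨(ρ.liftOfSurjective hρ ⟨ψ, hρψ⟩).comp (p.comp Abelianization.of), fun r => ?_⟩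
  have hp : p (.of r) = ρ r := Subtype.ext <| by simp [p, q, MonoidHom.mem_ker.mp r.2]; rfl
  simp [hp]

namespace CentralExt

variable {G : Type*} [Group G] (f : NormalizedCocycle G)

def center : Multiplicative ℤ →* CentralExt f where
  toFun k := ⟨k.toAdd, 1⟩
  map_one' := rfl
  map_mul' k l := by ext <;> simp [f.map_one_left]

theorem commute_center (k : Multiplicative ℤ) (x : CentralExt f) : Commute (center f k) x := by
  ext <;> simp [center, f.map_one_left, f.map_one_right, add_comm]

def ofFree : FreeGroup G →* CentralExt f := FreeGroup.lift fun g => ⟨0, g⟩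

theorem ofFree_g (w : FreeGroup G) : (ofFree f w).g = FreeGroup.lift id w := by
  have : proj.comp (ofFree f) = FreeGroup.lift id :=
    FreeGroup.ext_hom _ _ fun g => by simp [ofFree, proj]
  exact DFunLike.congr_fun this w

def relatorValue : presKernel G →* Multiplicative ℤ where
  toFun r := .ofAdd (ofFree f r).m
  map_one' := by simp
  map_mul' r s := by
    simp [ofFree_g, MonoidHom.mem_ker.mp r.2, MonoidHom.mem_ker.mp s.2, f.map_one_left]

theorem ofFree_of_mem (r : presKernel G) : ofFree f r = center f (relatorValue f r) := by
  ext
  · rfl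
  · exact (ofFree_g f r).trans (MonoidHom.mem_ker.mp r.2)

theorem relatorValue_eq_one (hH2 : Finite (H2 G)) (r : presKernel G)
    (hr : (r : FreeGroup G) ∈ commutator (FreeGroup G)) : relatorValue f r = 1 := by
  have hcomm : ⁅(⊤ : Subgroup (FreeGroup G)), presKernel G⁆ ≤ (ofFree f).ker := by
    rw [Subgroup.commutator_le]
    intro a _ b hb
    rw [MonoidHom.mem_ker, map_commutatorElement, ofFree_of_mem f ⟨b, hb⟩,
      commutatorElement_eq_one_iff_commute]
    exact (commute_center f _ _).symm
  obtain ⟨n, hn, hrn⟩ := exists_pow_mem_commutator_of_finite_H2 hH2 ⟨r.2, hr⟩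
  refine (pow_eq_one_iff_left hn.ne').mp ?_
  rw [← map_pow]
  exact congrArg (fun x : CentralExt f => Multiplicative.ofAdd x.m) (hcomm hrn)

theorem exists_section {ι : Type*} (hH2 : Finite (H2 G))
    (e : Additive (Abelianization G) ≃+ FreeAbelianGroup ι) :
    ∃ s : G →* CentralExt f, proj.comp s = MonoidHom.id G := by
  let π : FreeGroup G →* G := FreeGroup.lift id
  have hπ : Function.Surjective π := fun g => ⟨.of g, by simp [π]⟩
  obtain ⟨Φ, hΦ⟩ : ∃ Φ : FreeGroup G →* Multiplicative ℤ, ∀ r : presKernel G,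
      Φ r = relatorValue f r :=
    MonoidHom.exists_extension_of_free_abelianization e π hπ _ (relatorValue_eq_one f hH2)
  let τ : FreeGroup G →* CentralExt f :=
    { toFun w := ofFree f w * center f (Φ w)⁻¹
      map_one' := by simp
      map_mul' a b := by
        simp only [map_mul, mul_inv, mul_assoc, ((commute_center f _ _).left_comm)] }
  have hτ : presKernel G ≤ τ.ker := fun r hr => by
    change ofFree f r * center f (Φ r)⁻¹ = 1
    rw [hΦ ⟨r, hr⟩, ofFree_of_mem f ⟨r, hr⟩, map_inv, mul_inv_cancel]
  refine ⟨π.liftOfSurjective hπ ⟨τ, hτ⟩, MonoidHom.ext fun g => ?_⟩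
  obtain ⟨w, rfl⟩ := hπ g
  change (π.liftOfSurjective hπ ⟨τ, hτ⟩ (π w)).g = π w
  rw [MonoidHom.liftOfRightInverse_comp_apply]
  simp [τ, center, ofFree_g, π]

end CentralExt

/-- If `H₂(G)` is finite and the abelianization of `G` is free abelian,
then `G` is circularly orderable if and only if it is left-orderable. -/
theorem circularlyOrderable_iff_leftOrderable_of_finite_H2
    (G : Type u) [Group G] (hH2 : Finite (H2 G))
    (hab : ∃ ι : Type u, Nonempty (Additive (Abelianization G) ≃+ FreeAbelianGroup ι)) :
    IsCircularlyOrderable G ↔ IsLeftOrderable G := by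
  refine ⟨fun hG => ?_, IsLeftOrderable.isCircularlyOrderable⟩
  obtain ⟨_, hbot, hinv⟩ := hG.exists_linearOrder
  obtain ⟨ι, ⟨e⟩⟩ := hab
  obtain ⟨s, hs⟩ := CentralExt.exists_section (eulerCocycle hbot hinv) hH2 e
  exact (isLeftOrderable_centralExt_euler hbot hinv).of_injective s
    (Function.LeftInverse.injective (g := CentralExt.proj) (DFunLike.congr_fun hs))
end

section
/- Let 1 → A → G̃ → G → 1 and 1 → B → Ĝ → G → 1 be short exact sequences of groups, and let p : G̃ → Ĝ be a group homomorphism with p(A) ⊆ B which induces the identity map on the common quotient G. If A is left-orderable and Ĝ is circularly orderable, then G̃ is circularly orderable. -/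
universe u v w x y

/-!
Since `p` induces the identity on `G`, its kernel lies in `ker q = i(A)`, so it is left-orderable.
Order `G̃` lexicographically: two elements in distinct fibres of `p` are compared through the
circular order of their images in `Ĝ`, two elements of one fibre by the left order of `ker p`.
As a cocycle this is `p^* d + δσ`, where `d` is the cocycle of `Ĝ` and `σ(a, b) = ±1` records the
order of `a, b` when they share a fibre and vanishes otherwise; being the sum of a pullback
cocycle and a coboundary, it satisfies the cocycle identity for free, and the remaining axioms
are a case distinction on which of the three points share a fibre.
-/

section Lex

variable {α β : Type*}

open Classical in
noncomputable def relSign (r : α → α → Prop) (a b : α) : ℤ :=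
  if r a b then 1 else if r b a then -1 else 0

structure IsCircularOrderCocycle (c : α → α → α → ℤ) : Prop where
  mem : ∀ a b e, c a b e = -1 ∨ c a b e = 0 ∨ c a b e = 1
  eq_zero_iff : ∀ a b e, c a b e = 0 ↔ a = b ∨ a = e ∨ b = e
  cocycle : ∀ a b e g, c b e g - c a e g + c a b g - c a b e = 0

noncomputable def lexCocycle (f : α → β) (d : β → β → β → ℤ) (r : α → α → Prop) (a b c : α) :
    ℤ :=
  d (f a) (f b) (f c) + (relSign r b c - relSign r a c + relSign r a b)

variable {r : α → α → Prop} {f : α → β} {d : β → β → β → ℤ}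

lemma relSign_mem (a b : α) : relSign r a b = -1 ∨ relSign r a b = 0 ∨ relSign r a b = 1 := by
  unfold relSign; split_ifs <;> simp

lemma relSign_of_rel {a b : α} (h : r a b) : relSign r a b = 1 := by
  simp [relSign, h]

lemma relSign_eq_zero_of_ne (hf : ∀ a b, f a = f b ↔ a = b ∨ r a b ∨ r b a) {a b : α}
    (h : f a ≠ f b) : relSign r a b = 0 := by
  have := (hf a b).not.1 h
  simp only [relSign]; split_ifs <;> tauto

variable [IsStrictOrder α r]

lemma relSign_of_rel_swap {a b : α} (h : r b a) : relSign r a b = -1 := by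
  simp [relSign, h, asymm h]

lemma relSign_self (a : α) : relSign r a a = 0 := by
  simp [relSign, irrefl]

lemma relSign_swap (a b : α) : relSign r b a = -relSign r a b := by
  unfold relSign
  by_cases hab : r a b
  · simp [hab, asymm hab]
  · by_cases hba : r b a <;> simp [hab, hba]

variable (hf : ∀ a b, f a = f b ↔ a = b ∨ r a b ∨ r b a)
include hf

lemma relSign_eq_zero_iff {a b : α} (h : f a = f b) : relSign r a b = 0 ↔ a = b := by
  have := (hf a b).1 h
  unfold relSign
  constructor
  · intro h0; split_ifs at h0 <;> tauto
  · rintro rfl; simp [irrefl]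

lemma coboundary_relSign_mem_and_eq_zero_iff {a b c : α} (hab : f a = f b) (hac : f a = f c) :
    (relSign r b c - relSign r a c + relSign r a b = -1 ∨
      relSign r b c - relSign r a c + relSign r a b = 0 ∨
      relSign r b c - relSign r a c + relSign r a b = 1) ∧
    (relSign r b c - relSign r a c + relSign r a b = 0 ↔ a = b ∨ a = c ∨ b = c) := by
  by_cases hdist : a = b ∨ a = c ∨ b = c
  · have : relSign r b c - relSign r a c + relSign r a b = 0 := by
      rcases hdist with rfl | rfl | rfl
      · simp [relSign_self]
      · simp [relSign_self, relSign_swap b a]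
      · simp [relSign_self]
    simp [this, hdist]
  have cmp : ∀ x y, f x = f y → x ≠ y → r x y ∨ r y x := fun x y h hne => by
    simpa [hne] using (hf x y).1 h
  have h₁ := cmp a b hab (by tauto)
  have h₂ := cmp a c hac (by tauto)
  have h₃ := cmp b c (hab.symm.trans hac) (by tauto)
  -- six of the eight sign patterns are the orderings of `a, b, c`; the other two are cycles
  rcases h₁ with h₁ | h₁ <;> rcases h₂ with h₂ | h₂ <;> rcases h₃ with h₃ | h₃ <;>
    simp only [relSign_of_rel, relSign_of_rel_swap, *] <;>
    first
    | exact absurd (_root_.trans h₁ h₃) (asymm h₂)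
    | exact absurd (_root_.trans h₃ h₁) (asymm h₂)
    | norm_num

lemma lexCocycle_mem_and_eq_zero_iff (hd : IsCircularOrderCocycle d) (a b c : α) :
    (lexCocycle f d r a b c = -1 ∨ lexCocycle f d r a b c = 0 ∨ lexCocycle f d r a b c = 1) ∧
    (lexCocycle f d r a b c = 0 ↔ a = b ∨ a = c ∨ b = c) := by
  have hD := (hd.eq_zero_iff (f a) (f b) (f c)).2
  have hs := fun x y => relSign_eq_zero_of_ne hf (a := x) (b := y)
  have hz := fun x y => relSign_eq_zero_iff hf (a := x) (b := y)
  unfold lexCocycle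
  by_cases hab : f a = f b <;> by_cases hac : f a = f c
  · rw [hD (Or.inl hab), zero_add]
    exact coboundary_relSign_mem_and_eq_zero_iff hf hab hac
  · have hbc : f b ≠ f c := fun h => hac (hab.trans h)
    rw [hD (Or.inl hab), hs b c hbc, hs a c hac, zero_add, zero_sub, neg_zero, zero_add]
    refine ⟨relSign_mem a b, ?_⟩
    simp [hz a b hab, ne_of_apply_ne f hac, ne_of_apply_ne f hbc]
  · have hbc : f b ≠ f c := fun h => hab (hac.trans h.symm)
    rw [hD (Or.inr (Or.inl hac)), hs b c hbc, hs a b hab, zero_add, zero_sub, add_zero]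
    refine ⟨by rcases relSign_mem (r := r) a c with h | h | h <;> simp [h], ?_⟩
    simp [hz a c hac, ne_of_apply_ne f hab, ne_of_apply_ne f hbc]
  by_cases hbc : f b = f c
  · rw [hD (Or.inr (Or.inr hbc)), hs a c hac, hs a b hab, zero_add, sub_zero, add_zero]
    refine ⟨relSign_mem b c, ?_⟩
    simp [hz b c hbc, ne_of_apply_ne f hab, ne_of_apply_ne f hac]
  · rw [hs a c hac, hs a b hab, hs b c hbc, sub_zero, add_zero, add_zero]
    refine ⟨hd.mem _ _ _, ?_⟩
    simp [hd.eq_zero_iff, hab, hac, hbc, ne_of_apply_ne f hab, ne_of_apply_ne f hac,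
      ne_of_apply_ne f hbc]

theorem IsCircularOrderCocycle.lexCocycle (hd : IsCircularOrderCocycle d) :
    IsCircularOrderCocycle (lexCocycle f d r) where
  mem a b c := (lexCocycle_mem_and_eq_zero_iff hf hd a b c).1
  eq_zero_iff a b c := (lexCocycle_mem_and_eq_zero_iff hf hd a b c).2
  cocycle a b c e := by
    simp only [_root_.lexCocycle]
    linear_combination hd.cocycle (f a) (f b) (f c) (f e)

end Lex

section Group

variable {G H : Type*} [Group G] [Group H]

lemma relSign_mul_left {r : G → G → Prop} (hr : ∀ g a b, r (g * a) (g * b) ↔ r a b)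
    (g a b : G) : relSign r (g * a) (g * b) = relSign r a b := by
  unfold relSign; split_ifs <;> simp_all

lemma lexCocycle_mul_left {r : G → G → Prop} {d : H → H → H → ℤ} (f : G →* H)
    (hd : ∀ h x y z, d x y z = d (h * x) (h * y) (h * z))
    (hr : ∀ g a b, r (g * a) (g * b) ↔ r a b) (g a b c : G) :
    lexCocycle f d r (g * a) (g * b) (g * c) = lexCocycle f d r a b c := by
  simp only [lexCocycle, relSign_mul_left hr, map_mul, ← hd]

namespace Subgroup

def cosetLT (K : Subgroup G) (r : K → K → Prop) (a b : G) : Prop :=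
  ∃ k : K, r 1 k ∧ (k : G) = a⁻¹ * b

variable {K : Subgroup G} {r : K → K → Prop}

lemma cosetLT_mul_left_iff (g a b : G) : K.cosetLT r (g * a) (g * b) ↔ K.cosetLT r a b := by
  simp [cosetLT, mul_assoc]

variable (hr : ∀ g a b, r a b → r (g * a) (g * b))
include hr

lemma isStrictOrder_cosetLT [IsStrictOrder K r] : IsStrictOrder G (K.cosetLT r) where
  irrefl a := by
    rintro ⟨k, hk, hka⟩
    obtain rfl : k = 1 := Subtype.ext (by simpa using hka)
    exact irrefl _ hk
  trans a b c := by
    rintro ⟨k, hk, hka⟩ ⟨l, hl, hlb⟩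
    refine ⟨k * l, _root_.trans hk (by simpa using hr k 1 l hl), ?_⟩
    simp [hka, hlb, mul_assoc]

lemma mem_iff_cosetLT [IsStrictTotalOrder K r] (a b : G) :
    a⁻¹ * b ∈ K ↔ a = b ∨ K.cosetLT r a b ∨ K.cosetLT r b a := by
  constructor
  · intro hab
    rcases trichotomous (r := r) 1 ⟨_, hab⟩ with h | h | h
    · exact Or.inr (Or.inl ⟨_, h, rfl⟩)
    · exact Or.inl (inv_mul_eq_one.1 (congrArg Subtype.val h).symm)
    · refine Or.inr (Or.inr ⟨_, by simpa using hr (⟨_, hab⟩⁻¹) _ 1 h, ?_⟩)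
      simp
  · rintro (rfl | ⟨k, -, hk⟩ | ⟨k, -, hk⟩)
    · simp
    · exact hk ▸ k.2
    · simpa [hk] using K.inv_mem k.2

end Subgroup

lemma IsLeftOrderable.of_injective_s1 (f : G →* H) (hf : Function.Injective f)
    (hH : IsLeftOrderable H) : IsLeftOrderable G := by
  obtain ⟨r, hr, hr_mul⟩ := hH
  exact ⟨f ⁻¹'o r, (RelEmbedding.preimage ⟨f, hf⟩ r).isStrictTotalOrder,
    fun g a b h => by simpa [Order.Preimage] using hr_mul (f g) _ _ h⟩

theorem IsCircularlyOrderable.of_isLeftOrderable_ker (f : G →* H) (hK : IsLeftOrderable f.ker)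
    (hH : IsCircularlyOrderable H) : IsCircularlyOrderable G := by
  obtain ⟨r, hr, hr_mul⟩ := hK
  obtain ⟨d, hd_mem, hd_zero, hd_cocycle, hd_mul⟩ := hH
  have := f.ker.isStrictOrder_cosetLT hr_mul
  have hf (a b : G) : f a = f b ↔ a = b ∨ f.ker.cosetLT r a b ∨ f.ker.cosetLT r b a :=
    eq_comm.trans (f.eq_iff.trans (Subgroup.mem_iff_cosetLT hr_mul a b))
  have hc := IsCircularOrderCocycle.lexCocycle hf ⟨hd_mem, hd_zero, hd_cocycle⟩
  exact ⟨lexCocycle f d (f.ker.cosetLT r), hc.mem, hc.eq_zero_iff, hc.cocycle,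
    fun g a b c => (lexCocycle_mul_left f hd_mul Subgroup.cosetLT_mul_left_iff g a b c).symm⟩

end Group

theorem circularlyOrderable_of_extension_morphism_general
    {A : Type u} {Gt : Type v} {Gh : Type x} {G : Type y}
    [Group A] [Group Gt] [Group Gh] [Group G]
    (i : A →* Gt) (q : Gt →* G) (q' : Gh →* G) (p : Gt →* Gh)
    (hi : Function.Injective i) (hiq : q.ker = i.range)
    (hpG : ∀ x : Gt, q' (p x) = q x)
    (hA : IsLeftOrderable A) (hGh : IsCircularlyOrderable Gh) :
    IsCircularlyOrderable Gt := by
  have hker : p.ker ≤ i.range := fun x hx => hiq ▸ by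
    simpa [MonoidHom.mem_ker, ← hpG] using congrArg q' hx
  have hA' : IsLeftOrderable p.ker :=
    hA.of_injective_s1 ((MonoidHom.ofInjective hi).symm.toMonoidHom.comp (Subgroup.inclusion hker))
      ((MonoidHom.ofInjective hi).symm.injective.comp (Subgroup.inclusion_injective hker))
  exact .of_isLeftOrderable_ker p hA' hGh

/-- Given short exact sequences `1 → A → G̃ → G → 1` and
`1 → B → Ĝ → G → 1` and a homomorphism `p : G̃ → Ĝ` with `p(A) ⊆ B` inducing the
identity on `G`, if `A` is left-orderable and `Ĝ` is circularly orderable,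
then `G̃` is circularly orderable. -/
theorem circularlyOrderable_of_extension_morphism
    {A : Type u} {Gt : Type v} {B : Type w} {Gh : Type x} {G : Type y}
    [Group A] [Group Gt] [Group B] [Group Gh] [Group G]
    (i : A →* Gt) (q : Gt →* G) (j : B →* Gh) (q' : Gh →* G) (p : Gt →* Gh)
    (hi : Function.Injective i) (hq : Function.Surjective q) (hiq : q.ker = i.range)
    (hj : Function.Injective j) (hq' : Function.Surjective q') (hjq : q'.ker = j.range)
    (hpA : ∀ a : A, p (i a) ∈ j.range)
    (hpG : ∀ x : Gt, q' (p x) = q x)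
    (hA : IsLeftOrderable A) (hGh : IsCircularlyOrderable Gh) :
    IsCircularlyOrderable Gt :=
  circularlyOrderable_of_extension_morphism_general i q q' p hi hiq hpG hA hGh
end

section
/- Let G be a circularly orderable group such that H₁(G) is free abelian and H₂(G) is torsion-free. Let 1 → A → G_u →^π G → 1 be a central extension with A ≅ H₂(G) which is universal in the sense that for every central extension 1 → B → E →^p G → 1 there exists a group homomorphism f : G_u → E with p ∘ f = π. Then G_u is left-orderable. -/
/-!
Cutting a left-invariant circular order on `G` open at `1` gives a linear order on `G`; the
indicator `euler g h` of "`g * h` lies below `g`" is a normalized `{0, 1}`-valued 2-cocycle, and the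
central extension of `G` by `ℤ` it defines is left-orderable. By universality `G_u` maps to this
extension over `G`, so the kernel of that map lies in the central subgroup `A ≅ H₂(G)`, which is
torsion-free. Torsion-free abelian groups are left-orderable, and left-orderability passes to
extensions, hence to `G_u`.
-/

universe u

structure IsPositiveCone {G : Type*} [Group G] (P : Set G) : Prop where
  mul_mem {a b : G} : a ∈ P → b ∈ P → a * b ∈ P
  one_notMem : (1 : G) ∉ P
  mem_or_inv_mem {a : G} : a ≠ 1 → a ∈ P ∨ a⁻¹ ∈ P

theorem isLeftOrderable_iff_exists_isPositiveCone {G : Type u} [Group G] :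
    IsLeftOrderable G ↔ ∃ P : Set G, IsPositiveCone P := by
  constructor
  · rintro ⟨r, hr, hinv⟩
    refine ⟨{g | r 1 g}, fun ha hb => ?_, irrefl_of r 1, fun {a} ha => ?_⟩
    · exact _root_.trans_of r ha (by simpa using hinv _ _ _ hb)
    · rcases trichotomous_of r 1 a with h | h | h
      · exact Or.inl h
      · exact absurd h.symm ha
      · exact Or.inr (by simpa using hinv a⁻¹ _ _ h)
  · rintro ⟨P, hP⟩
    refine ⟨fun a b => a⁻¹ * b ∈ P, ?_, fun h a b hab => by simpa [mul_assoc] using hab⟩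
    refine { trichotomous := fun a b hab hba => ?_, irrefl := fun a => ?_,
             trans := fun a b c hab hbc => ?_ }
    · by_contra hne
      rcases hP.mem_or_inv_mem (mt inv_mul_eq_one.mp hne) with h | h
      · exact hab h
      · exact hba (by simpa using h)
    · simpa using hP.one_notMem
    · simpa [mul_assoc] using hP.mul_mem hab hbc

theorem IsLeftOrderable.of_ker {G H : Type u} [Group G] [Group H] (f : G →* H)
    (hH : IsLeftOrderable H) (hK : IsLeftOrderable f.ker) : IsLeftOrderable G := by
  rw [isLeftOrderable_iff_exists_isPositiveCone] at *
  obtain ⟨Q, hQ⟩ := hH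
  obtain ⟨P, hP⟩ := hK
  refine ⟨f ⁻¹' Q ∪ Subtype.val '' P, ⟨?_, ?_, fun {g} hg => ?_⟩⟩
  · rintro a b (ha | ⟨a, ha, rfl⟩) (hb | ⟨b, hb, rfl⟩)
    · exact Or.inl (by simpa using hQ.mul_mem ha hb)
    · exact Or.inl (by simpa [MonoidHom.mem_ker.mp b.2] using ha)
    · exact Or.inl (by simpa [MonoidHom.mem_ker.mp a.2] using hb)
    · exact Or.inr ⟨a * b, hP.mul_mem ha hb, rfl⟩
  · rintro (h | ⟨a, ha, h⟩)
    · exact hQ.one_notMem (by simpa using h)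
    · exact hP.one_notMem (by rwa [Subtype.ext (h.trans f.ker.coe_one.symm)] at ha)
  · by_cases hfg : f g = 1
    · have hne : (⟨g, hfg⟩ : f.ker) ≠ 1 := fun h => hg (congrArg Subtype.val h)
      rcases hP.mem_or_inv_mem hne with h | h
      · exact Or.inl (Or.inr ⟨_, h, rfl⟩)
      · exact Or.inr (Or.inr ⟨_, h, rfl⟩)
    · rcases hQ.mem_or_inv_mem hfg with h | h
      · exact Or.inl (Or.inl h)
      · exact Or.inr (Or.inl (by simpa using h))

/- `A` embeds into the `ℚ`-vector space `DivisibleHull (Additive A)`, whose coordinate vectors in a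
basis are ordered lexicographically. -/
open scoped IsMulCommutative in
theorem isLeftOrderable_of_isMulCommutative_of_torsionFree {A : Type u} [Group A]
    [IsMulCommutative A] (htf : ∀ a : A, IsOfFinOrder a → a = 1) : IsLeftOrderable A := by
  classical
  have : IsAddTorsionFree (Additive A) :=
    IsAddTorsionFree.of_not_isOfFinAddOrder fun a ha hfin => ha (htf _ hfin)
  let V := DivisibleHull (Additive A)
  let ι := Module.Free.ChooseBasisIndex ℚ V
  let _ : LinearOrder ι := IsWellOrder.linearOrder WellOrderingRel
  let φ : Additive A →+ (ι →₀ ℚ) :=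
    (Module.Free.chooseBasis ℚ V).repr.toAddMonoidHom.comp (DivisibleHull.coeAddMonoidHom _)
  have hφ : Function.Injective φ :=
    (Module.Free.chooseBasis ℚ V).repr.injective.comp DivisibleHull.coe_injective
  rw [isLeftOrderable_iff_exists_isPositiveCone]
  refine ⟨{a | 0 < toLex (φ (.ofMul a))}, ⟨fun ha hb => ?_, ?_, fun {a} ha => ?_⟩⟩
  · simpa using add_pos ha hb
  · simp
  · have : φ (.ofMul a) ≠ 0 := (map_ne_zero_iff φ hφ).mpr ha
    rcases (show toLex (φ (.ofMul a)) ≠ 0 from this).lt_or_gt with h | h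
    · exact Or.inr (by simpa using neg_pos.mpr h)
    · exact Or.inl h

structure NormalizedTwoCocycle (G : Type u) [Group G] where
  toFun : G → G → ℤ
  one_left : ∀ g, toFun 1 g = 0
  one_right : ∀ g, toFun g 1 = 0
  cocycle : ∀ g h k, toFun g h + toFun (g * h) k = toFun h k + toFun g (h * k)

namespace NormalizedTwoCocycle

variable {G : Type u} [Group G] (τ : NormalizedTwoCocycle G)

instance : CoeFun (NormalizedTwoCocycle G) fun _ => G → G → ℤ := ⟨toFun⟩

@[ext]
structure Extension (τ : NormalizedTwoCocycle G) : Type u where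
  n : ℤ
  g : G

namespace Extension

instance : Mul τ.Extension := ⟨fun x y => ⟨x.n + y.n + τ x.g y.g, x.g * y.g⟩⟩
instance : One τ.Extension := ⟨⟨0, 1⟩⟩
instance : Inv τ.Extension := ⟨fun x => ⟨-x.n - τ x.g⁻¹ x.g, x.g⁻¹⟩⟩

variable {τ}

@[simp] theorem mul_n (x y : τ.Extension) : (x * y).n = x.n + y.n + τ x.g y.g := rfl
@[simp] theorem mul_g (x y : τ.Extension) : (x * y).g = x.g * y.g := rfl
@[simp] theorem one_n : (1 : τ.Extension).n = 0 := rfl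
@[simp] theorem one_g : (1 : τ.Extension).g = 1 := rfl
@[simp] theorem inv_n (x : τ.Extension) : x⁻¹.n = -x.n - τ x.g⁻¹ x.g := rfl
@[simp] theorem inv_g (x : τ.Extension) : x⁻¹.g = x.g⁻¹ := rfl

instance : Group τ.Extension where
  mul_assoc x y z := by
    ext
    · have := τ.cocycle x.g y.g z.g
      simp only [mul_n, mul_g]
      omega
    · exact mul_assoc ..
  one_mul x := by ext <;> simp [τ.one_left]
  mul_one x := by ext <;> simp [τ.one_right]
  inv_mul_cancel x := by
    ext
    · simp only [mul_n, inv_n, inv_g, one_n]; ring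
    · simp

variable (τ) in
def proj : τ.Extension →* G where
  toFun := g
  map_one' := rfl
  map_mul' _ _ := rfl

theorem proj_surjective : Function.Surjective (proj τ) := fun g => ⟨⟨0, g⟩, rfl⟩

theorem ker_proj_le_center : (proj τ).ker ≤ Subgroup.center τ.Extension := by
  intro x (hx : x.g = 1)
  refine Subgroup.mem_center_iff.mpr fun y => ?_
  ext
  · simp [hx, τ.one_left, τ.one_right, add_comm]
  · simp [hx]


/- The positive cone is `{x ≠ 1 | 0 ≤ x.n}`; a product of two of its elements could only be `1`
if they were `(0, g)` and `(0, g⁻¹)`, which `hinv` excludes. -/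
theorem isLeftOrderable (hmem : ∀ g h, τ g h = 0 ∨ τ g h = 1)
    (hinv : ∀ g, g ≠ 1 → τ g g⁻¹ = 1) : IsLeftOrderable τ.Extension := by
  rw [isLeftOrderable_iff_exists_isPositiveCone]
  refine ⟨{x | x ≠ 1 ∧ 0 ≤ x.n},
    ⟨fun {x y} ⟨hx, hx₀⟩ ⟨_, hy₀⟩ => ⟨fun hxy => ?_, ?_⟩, by simp, fun {x} hx => ?_⟩⟩
  · have hτ := hmem x.g y.g
    have hn : x.n + y.n + τ x.g y.g = 0 := congrArg n hxy
    have hx₁ : x.g ≠ 1 := fun h => hx (Extension.ext (by rw [one_n]; omega) h)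
    have := hinv x.g hx₁
    rw [← eq_inv_of_mul_eq_one_right (congrArg g hxy)] at this
    omega
  · have := hmem x.g y.g
    simp only [mul_n]
    omega
  · have := hmem x.g⁻¹ x.g
    by_cases hx₀ : 0 ≤ x.n
    · exact Or.inl ⟨hx, hx₀⟩
    · exact Or.inr ⟨inv_ne_one.mpr hx, by simp only [inv_n]; omega⟩

end Extension
end NormalizedTwoCocycle

structure CircularOrderCocycle (G : Type u) [Group G] where
  c : G → G → G → ℤ
  c_mem : ∀ g₁ g₂ g₃ : G, c g₁ g₂ g₃ = -1 ∨ c g₁ g₂ g₃ = 0 ∨ c g₁ g₂ g₃ = 1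
  c_eq_zero_iff : ∀ g₁ g₂ g₃ : G, c g₁ g₂ g₃ = 0 ↔ g₁ = g₂ ∨ g₁ = g₃ ∨ g₂ = g₃
  cocycle : ∀ g₁ g₂ g₃ g₄ : G, c g₂ g₃ g₄ - c g₁ g₃ g₄ + c g₁ g₂ g₄ - c g₁ g₂ g₃ = 0
  c_mul : ∀ h g₁ g₂ g₃ : G, c g₁ g₂ g₃ = c (h * g₁) (h * g₂) (h * g₃)

namespace CircularOrderCocycle

variable {G : Type u} [Group G] (co : CircularOrderCocycle G)

open scoped Classical

theorem c_swap (a b d : G) : co.c a b d = -co.c a d b := by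
  have h := co.cocycle a b d b
  rw [(co.c_eq_zero_iff b d b).mpr (Or.inr (Or.inl rfl)),
    (co.c_eq_zero_iff a b b).mpr (Or.inr (Or.inr rfl))] at h
  omega

/- The sign (`1`, `0` or `-1`) of the comparison `a < b` in the linear order obtained by cutting
the circular order at `1`, which becomes the least element. -/
noncomputable def cutSign (a b : G) : ℤ :=
  co.c 1 a b + (if a = 1 then 1 else 0) - (if b = 1 then 1 else 0)

theorem c_eq_cutSign (x y z : G) :
    co.c x y z = co.cutSign x y + co.cutSign y z + co.cutSign z x := by
  have := co.cocycle 1 x y z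
  have := co.c_swap 1 z x
  unfold cutSign
  omega

theorem cutSign_swap (a b : G) : co.cutSign b a = -co.cutSign a b := by
  have := co.c_swap 1 a b
  unfold cutSign
  omega

theorem cutSign_self (a : G) : co.cutSign a a = 0 := by
  have := (co.c_eq_zero_iff 1 a a).mpr (Or.inr (Or.inr rfl))
  unfold cutSign
  omega

theorem one_cutSign (a : G) : co.cutSign 1 a = 1 - if a = 1 then 1 else 0 := by
  have := (co.c_eq_zero_iff 1 1 a).mpr (Or.inl rfl)
  unfold cutSign
  simp only [if_true]
  omega

theorem cutSign_eq_one_or_neg_one {a b : G} (hab : a ≠ b) :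
    co.cutSign a b = 1 ∨ co.cutSign a b = -1 := by
  have hz : co.c 1 a b = 0 ↔ a = 1 ∨ b = 1 := by rw [co.c_eq_zero_iff]; simp [eq_comm, hab]
  rcases co.c_mem 1 a b with h | h | h <;> unfold cutSign <;> split_ifs <;> simp_all

-- `1` exactly when the step from `g` to `g * h` passes the cut at `1`.
noncomputable def euler (g h : G) : ℤ := if co.cutSign g (g * h) = -1 then 1 else 0

theorem two_mul_euler (g h : G) :
    2 * co.euler g h = 1 - co.cutSign g (g * h) - if h = 1 then 1 else 0 := by
  unfold euler
  by_cases hh : h = 1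
  · simp [hh, cutSign_self]
  · have hne : g ≠ g * h := by simpa using hh
    rcases co.cutSign_eq_one_or_neg_one hne with hs | hs <;> simp [hs, hh]

theorem euler_cocycle (g h k : G) :
    co.euler g h + co.euler (g * h) k = co.euler h k + co.euler g (h * k) := by
  -- twice the defect is a combination of the cut-sign expansions of `c g (g * h) (g * h * k)` and
  -- of its left translate `c 1 h (h * k)`
  have e₁ := co.two_mul_euler g h
  have e₂ := co.two_mul_euler (g * h) k
  have e₃ := co.two_mul_euler h k
  have e₄ := co.two_mul_euler g (h * k)
  have hc := co.c_eq_cutSign g (g * h) (g * (h * k))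
  have hc₁ := co.c_eq_cutSign 1 h (h * k)
  have hmul := co.c_mul g 1 h (h * k)
  have hswap := co.cutSign_swap g (g * (h * k))
  have hs₁ := co.one_cutSign h
  have hs₂ := co.cutSign_swap (h * k) 1
  have hs₃ := co.one_cutSign (h * k)
  rw [mul_one] at hmul
  rw [mul_assoc] at e₂
  omega

theorem euler_mem (g h : G) : co.euler g h = 0 ∨ co.euler g h = 1 := by
  unfold euler; split_ifs <;> simp

theorem euler_inv {g : G} (hg : g ≠ 1) : co.euler g g⁻¹ = 1 := by
  have h₁ := co.one_cutSign g
  have h₂ := co.cutSign_swap 1 g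
  rw [if_neg hg] at h₁
  have : co.cutSign g 1 = -1 := by omega
  simp [euler, this]

theorem euler_one_left (g : G) : co.euler 1 g = 0 := by
  have := co.one_cutSign g
  rw [euler, one_mul, if_neg]
  split_ifs at this <;> omega

theorem euler_one_right (g : G) : co.euler g 1 = 0 := by
  simp [euler, cutSign_self]

noncomputable def eulerCocycle : NormalizedTwoCocycle G where
  toFun := co.euler
  one_left := co.euler_one_left
  one_right := co.euler_one_right
  cocycle := co.euler_cocycle

theorem isLeftOrderable_extension : IsLeftOrderable co.eulerCocycle.Extension :=
  NormalizedTwoCocycle.Extension.isLeftOrderable co.euler_mem fun _ ↦ co.euler_inv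

end CircularOrderCocycle

theorem Subgroup.isLeftOrderable_of_le_center {G : Type u} [Group G] {K : Subgroup G}
    (hK : K ≤ Subgroup.center G) (htf : ∀ g ∈ K, IsOfFinOrder g → g = 1) : IsLeftOrderable K :=
  have : IsMulCommutative K := ⟨⟨fun a b => Subtype.ext (Subgroup.mem_center_iff.mp (hK b.2) a)⟩⟩
  isLeftOrderable_of_isMulCommutative_of_torsionFree fun a ha =>
    Subtype.ext (htf a a.2 (Submonoid.isOfFinOrder_coe.mpr ha))

theorem universal_extension_leftOrderable_general
    (G : Type u) (A : Type u) (Gu : Type u) [Group G] [Group A] [Group Gu]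
    (hG : IsCircularlyOrderable G)
    (hH2 : ∀ a : H2 G, IsOfFinOrder a → a = 1)
    (i : A →* Gu) (π : Gu →* G)
    (hi : Function.Injective i)
    (hker : π.ker = i.range) (hcent : i.range ≤ Subgroup.center Gu)
    (hA : Nonempty (A ≃* H2 G))
    (huniv : ∀ (B E : Type u) [Group B] [Group E] (j : B →* E) (p : E →* G),
      Function.Injective j → Function.Surjective p → p.ker = j.range →
      j.range ≤ Subgroup.center E → ∃ f : Gu →* E, p.comp f = π) :
    IsLeftOrderable Gu := by
  obtain ⟨c, h₁, h₂, h₃, h₄⟩ := hG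
  let co : CircularOrderCocycle G := ⟨c, h₁, h₂, h₃, h₄⟩
  let p := NormalizedTwoCocycle.Extension.proj co.eulerCocycle
  obtain ⟨f, hf⟩ := huniv _ _ p.ker.subtype p (Subgroup.subtype_injective _)
    NormalizedTwoCocycle.Extension.proj_surjective (Subgroup.range_subtype _).symm
    (by rw [Subgroup.range_subtype]; exact NormalizedTwoCocycle.Extension.ker_proj_le_center)
  have hker_f : f.ker ≤ i.range := fun x hx => by
    rw [← hker, MonoidHom.mem_ker, ← hf, MonoidHom.comp_apply, hx, map_one]
  have htf : ∀ g ∈ f.ker, IsOfFinOrder g → g = 1 := by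
    rintro _ hg hfin
    obtain ⟨a, rfl⟩ := hker_f hg
    obtain ⟨e⟩ := hA
    have : e a = 1 := hH2 _ (e.toMonoidHom.isOfFinOrder (hi.isOfFinOrder_iff.mp hfin))
    rw [e.map_eq_one_iff.mp this, map_one]
  exact IsLeftOrderable.of_ker f co.isLeftOrderable_extension
    (Subgroup.isLeftOrderable_of_le_center (hker_f.trans hcent) htf)

/-- If `G` is circularly orderable, `H₁(G)` is free abelian and `H₂(G)`
is torsion-free, then the universal central extension `G_u` of `G` is left-orderable. -/
theorem universal_extension_leftOrderable
    (G : Type u) (A : Type u) (Gu : Type u) [Group G] [Group A] [Group Gu]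
    (hG : IsCircularlyOrderable G)
    (hH1 : ∃ ι : Type u, Nonempty (Additive (Abelianization G) ≃+ FreeAbelianGroup ι))
    (hH2 : ∀ a : H2 G, IsOfFinOrder a → a = 1)
    (i : A →* Gu) (π : Gu →* G)
    (hi : Function.Injective i) (hπ : Function.Surjective π)
    (hker : π.ker = i.range) (hcent : i.range ≤ Subgroup.center Gu)
    (hA : Nonempty (A ≃* H2 G))
    (huniv : ∀ (B E : Type u) [Group B] [Group E] (j : B →* E) (p : E →* G),
      Function.Injective j → Function.Surjective p → p.ker = j.range →
      j.range ≤ Subgroup.center E → ∃ f : Gu →* E, p.comp f = π) :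
    IsLeftOrderable Gu :=
  universal_extension_leftOrderable_general G A Gu hG hH2 i π hi hker hcent hA huniv
end

section
/- Let G be a group with H₁(G) ≅ ℤᵏ for some k and H₂(G) finite. Let 1 → A → G_u → G → 1 be a central extension with A ≅ H₂(G) (for example, a universal central extension of G). Then H₂(G_u) is finite. -/
universe u

/-!
Hopf's formula places `H₂(Gu)` inside `Q = F/[F,S]`, where `F/S` is the free presentation of `Gu`;
`Q` is a central extension of `Gu`. The map `H₂(Gu) → H₂(G)` induced by `π` has finite image, and
its kernel lies in `[Q, N]`, `N` the preimage of `ker π` in `Q`: comparing `F` with the free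
presentation of `G` through a set-theoretic section of `π`, two lifts of the same map agree on
`[F,F]` modulo `[F,R]`, `R` the preimage of `ker π` in `F`. As `ker π` is finite and central,
the commutator pairing `Q × N → Z(Q)` factors through `H₁(Gu) × ker π`, so `[Q, N]` is a finitely
generated abelian torsion group, hence finite. Finally `H₁(Gu)` is finitely generated because
`H₁(G) ≅ ℤᵏ` is and `ker π` is finite.
-/

open Subgroup
open scoped commutatorElement IsMulCommutative

section Commutators

variable {Q : Type*} [Group Q]

theorem map_mk'_le_center_quotient_commutator (N : Subgroup Q) [N.Normal] :
    N.map (QuotientGroup.mk' ⁅(⊤ : Subgroup Q), N⁆) ≤ center (Q ⧸ ⁅(⊤ : Subgroup Q), N⁆) := by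
  rintro _ ⟨r, hr, rfl⟩
  refine mem_center_iff.2 fun q => ?_
  induction q using QuotientGroup.induction_on with
  | H f =>
    refine (commutatorElement_eq_one_iff_commute.1 ?_).eq
    rw [← QuotientGroup.mk'_apply, ← map_commutatorElement, QuotientGroup.mk'_apply,
      QuotientGroup.eq_one_iff]
    exact commutator_mem_commutator (mem_top f) hr

theorem map_commutator_top_le {F : Type*} [Group F] (φ : Q →* F) {N₁ : Subgroup Q}
    {N₂ : Subgroup F} (h : N₁.map φ ≤ N₂) :
    ⁅(⊤ : Subgroup Q), N₁⁆.map φ ≤ ⁅(⊤ : Subgroup F), N₂⁆ := by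
  rw [map_commutator]
  exact commutator_mono le_top h

theorem eq_of_mem_commutator_of_mul_inv_mem_center {F : Type*} [Group F] (f₁ f₂ : F →* Q)
    (h : ∀ y, f₁ y * (f₂ y)⁻¹ ∈ center Q) {x : F} (hx : x ∈ commutator F) : f₁ x = f₂ x := by
  let d : F →* center Q :=
    { toFun y := ⟨f₁ y * (f₂ y)⁻¹, h y⟩
      map_one' := by ext; simp
      map_mul' a b := by
        ext
        simp only [map_mul, mul_inv_rev, Subgroup.coe_mul]
        rw [mul_assoc (f₁ a) (f₂ a)⁻¹, mem_center_iff.1 (h b) (f₂ a)⁻¹]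
        group }
  exact mul_inv_eq_one.1 (congrArg Subtype.val (Abelianization.commutator_subset_ker d hx))

theorem mul_inv_mem_commutator_of_forall_mul_inv_mem {F : Type*} [Group F] (N : Subgroup Q)
    [N.Normal] (l₁ l₂ : F →* Q) (h : ∀ y, l₁ y * (l₂ y)⁻¹ ∈ N) {x : F}
    (hx : x ∈ commutator F) : l₁ x * (l₂ x)⁻¹ ∈ ⁅(⊤ : Subgroup Q), N⁆ := by
  let mk := QuotientGroup.mk' ⁅(⊤ : Subgroup Q), N⁆
  rw [← QuotientGroup.ker_mk' ⁅(⊤ : Subgroup Q), N⁆, MonoidHom.mem_ker, map_mul, map_inv,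
    mul_inv_eq_one]
  refine eq_of_mem_commutator_of_mul_inv_mem_center (mk.comp l₁) (mk.comp l₂) (fun y => ?_) hx
  exact map_mk'_le_center_quotient_commutator N ⟨_, h y, by simp [mk]⟩

def commutatorElementHom (z : Q) (hz : ∀ q : Q, ⁅q, z⁆ ∈ center Q) : Q →* center Q where
  toFun q := ⟨⁅q, z⁆, hz q⟩
  map_one' := Subtype.ext (commutatorElement_one_left z)
  map_mul' a b := by
    have hb : a * ⁅b, z⁆ * a⁻¹ = ⁅b, z⁆ := by rw [mem_center_iff.1 (hz b) a]; group
    refine Subtype.ext ?_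
    calc ⁅a * b, z⁆ = a * ⁅b, z⁆ * a⁻¹ * ⁅a, z⁆ := by simp only [commutatorElement_def]; group
      _ = ⁅a, z⁆ * ⁅b, z⁆ := by rw [hb]; exact (mem_center_iff.1 (hz b) _).symm

@[simp]
theorem commutatorElementHom_apply (z : Q) (hz : ∀ q : Q, ⁅q, z⁆ ∈ center Q) (q : Q) :
    (commutatorElementHom z hz q : Q) = ⁅q, z⁆ :=
  rfl

theorem commutatorElement_mul_right_of_mem_center (q z : Q) {s : Q} (hs : s ∈ center Q) :
    ⁅q, z * s⁆ = ⁅q, z⁆ :=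
  calc ⁅q, z * s⁆ = q * z * (s * q⁻¹) * s⁻¹ * z⁻¹ := by rw [commutatorElement_def]; group
    _ = ⁅q, z⁆ := by rw [← mem_center_iff.1 hs q⁻¹, commutatorElement_def]; group

theorem commutatorElement_pow_eq_one_of_mem_center {q z : Q} (hqz : ⁅q, z⁆ ∈ center Q) {m : ℕ}
    (hzm : z ^ m ∈ center Q) : ⁅q, z⁆ ^ m = 1 := by
  have hconj : q * z * q⁻¹ = ⁅q, z⁆ * z := by rw [commutatorElement_def]; group
  have key : q * z ^ m * q⁻¹ = ⁅q, z⁆ ^ m * z ^ m := by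
    rw [← conj_pow, hconj, (Commute.symm (mem_center_iff.1 hqz z)).mul_pow]
  rw [mem_center_iff.1 hzm q, mul_inv_cancel_right] at key
  exact mul_eq_right.1 key.symm

end Commutators

section FinitelyGenerated

theorem Abelianization.of_surjective (G : Type*) [Group G] :
    Function.Surjective (of : G →* Abelianization G) :=
  QuotientGroup.mk'_surjective _

theorem Group.fg_of_surjective_of_fg_ker {G H : Type*} [Group G] [Group H] [Group.FG H]
    {f : G →* H} (hf : Function.Surjective f) (hker : f.ker.FG) : Group.FG G := by
  classical
  obtain ⟨S, hS⟩ := Group.fg_def.1 ‹_›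
  have htop : (⊤ : Subgroup G) = Subgroup.closure ↑(S.image (Function.surjInv hf)) ⊔ f.ker := by
    rw [← comap_map_eq, MonoidHom.map_closure, Finset.coe_image, Set.image_image]
    simp [Function.surjInv_eq hf, hS]
  exact Group.fg_def.2 (htop ▸ Subgroup.FG.sup ⟨_, rfl⟩ hker)

theorem Abelianization.fg_of_surjective_of_finite_ker {G H : Type*} [Group G] [Group H]
    [Group.FG (Abelianization H)] {f : G →* H} (hf : Function.Surjective f) [Finite f.ker] :
    Group.FG (Abelianization G) := by
  have hsurj : Function.Surjective (Abelianization.map f) := by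
    intro y
    obtain ⟨h, rfl⟩ := of_surjective H y
    obtain ⟨g, rfl⟩ := hf h
    exact ⟨of g, map_of f g⟩
  have hker : (Abelianization.map f).ker ≤ f.ker.map of := by
    intro x hx
    obtain ⟨g, rfl⟩ := of_surjective G x
    rw [MonoidHom.mem_ker, map_of, ← MonoidHom.mem_ker, ker_of, commutator_def,
      ← map_top_of_surjective f hf, ← map_commutator, ← commutator_def] at hx
    obtain ⟨c, hc, hcg⟩ := hx
    refine ⟨c⁻¹ * g, by simp [hcg], ?_⟩
    rw [← ker_of] at hc
    rw [map_mul, map_inv, hc, inv_one, one_mul]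
  have : Finite (f.ker.map of) := ((Set.toFinite (f.ker : Set G)).image of).to_subtype
  have : Finite (Abelianization.map f).ker := Finite.of_injective _ (inclusion_injective hker)
  exact Group.fg_of_surjective_of_fg_ker hsurj ((Group.fg_iff_subgroup_fg _).1 inferInstance)

theorem finite_iSup_range_of_pow_eq_one {ι A C : Type*} [Finite ι] [Group A] [Group.FG A]
    [CommGroup C] (f : ι → A →* C) {m : ℕ} (hm : 0 < m) (h : ∀ i a, f i a ^ m = 1) :
    Finite ↥(⨆ i, (f i).range) := by
  have hfg : (⨆ i, (f i).range).FG :=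
    Subgroup.FG.iSup _ fun i => (Group.fg_iff_subgroup_fg _).1 inferInstance
  have hexp : ⨆ i, (f i).range ≤ (powMonoidHom m).ker :=
    iSup_le fun i => by rintro _ ⟨a, rfl⟩; exact h i a
  have := (Group.fg_iff_subgroup_fg _).2 hfg
  exact CommGroup.finite_of_fg_isMulTorsion _ fun x =>
    isOfFinOrder_iff_pow_eq_one.2 ⟨m, hm, Subtype.ext (hexp x.2)⟩

end FinitelyGenerated

section CentralExtension

variable {Q H : Type*} [Group Q] [Group H] {φ : Q →* H}

theorem commutatorElement_mem_center_of_ker_le_center (hker : φ.ker ≤ center Q) {z : Q}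
    (hz : φ z ∈ center H) (q : Q) : ⁅q, z⁆ ∈ center Q := by
  refine hker ?_
  rw [MonoidHom.mem_ker, map_commutatorElement, commutatorElement_eq_one_iff_commute]
  exact mem_center_iff.1 hz (φ q)

noncomputable def commutatorPairing (hφ : Function.Surjective φ) (hker : φ.ker ≤ center Q)
    (z : Q) (hz : φ z ∈ center H) : H →* center Q :=
  φ.liftOfSurjective hφ
    ⟨commutatorElementHom z (commutatorElement_mem_center_of_ker_le_center hker hz), fun _ hs =>
      Subtype.ext (commutatorElement_eq_one_iff_commute.2 (mem_center_iff.1 (hker hs) z).symm)⟩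

@[simp]
theorem commutatorPairing_apply (hφ : Function.Surjective φ) (hker : φ.ker ≤ center Q) (z : Q)
    (hz : φ z ∈ center H) (q : Q) : (commutatorPairing hφ hker z hz (φ q) : Q) = ⁅q, z⁆ := by
  simp [commutatorPairing]

theorem finite_commutator_comap_of_ker_le_center [Group.FG (Abelianization H)]
    (hφ : Function.Surjective φ) (hker : φ.ker ≤ center Q) {K : Subgroup H} [Finite K]
    (hK : K ≤ center H) : Finite ↥⁅(⊤ : Subgroup Q), K.comap φ⁆ := by
  let lift (k : K) : Q := Function.surjInv hφ k
  have hlift (k : K) : φ (lift k) = k := Function.surjInv_eq hφ k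
  let pairing (k : K) : Abelianization H →* center Q :=
    Abelianization.lift (commutatorPairing hφ hker (lift k) (hlift k ▸ hK k.2))
  have pairing_of (k : K) (q : Q) : (pairing k (.of (φ q)) : Q) = ⁅q, lift k⁆ := by
    simp [pairing]
  have hexp (k : K) (x : Abelianization H) : pairing k x ^ Nat.card K = 1 := by
    obtain ⟨h, rfl⟩ := Abelianization.of_surjective H x
    obtain ⟨q, rfl⟩ := hφ h
    refine Subtype.ext ?_
    rw [SubmonoidClass.coe_pow, pairing_of, OneMemClass.coe_one]
    refine commutatorElement_pow_eq_one_of_mem_center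
      (commutatorElement_mem_center_of_ker_le_center hker (hlift k ▸ hK k.2) q) (hker ?_)
    rw [MonoidHom.mem_ker, map_pow, hlift]
    exact congrArg Subtype.val (pow_card_eq_one' (G := K))
  have := finite_iSup_range_of_pow_eq_one pairing Nat.card_pos hexp
  have : Finite ((⨆ k, (pairing k).range).map (center Q).subtype) :=
    ((Set.toFinite ((⨆ k, (pairing k).range : Subgroup (center Q)) : Set (center Q))).image
      _).to_subtype
  have hle : ⁅(⊤ : Subgroup Q), K.comap φ⁆ ≤ (⨆ k, (pairing k).range).map (center Q).subtype := by
    refine commutator_le.2 fun q _ z hz => ⟨pairing ⟨φ z, hz⟩ (.of (φ q)),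
      mem_iSup_of_mem _ ⟨_, rfl⟩, ?_⟩
    rw [coe_subtype, pairing_of]
    calc ⁅q, lift ⟨φ z, hz⟩⁆ = ⁅q, lift ⟨φ z, hz⟩ * ((lift ⟨φ z, hz⟩)⁻¹ * z)⁆ :=
          (commutatorElement_mul_right_of_mem_center _ _ (hker (by simp [hlift]))).symm
      _ = ⁅q, z⁆ := by rw [mul_inv_cancel_left]
  exact Finite.of_injective _ (inclusion_injective hle)

end CentralExtension

section FreePresentation

variable {G H : Type u} [Group G] [Group H]

theorem FreeGroup.lift_id_comp_map (f : H →* G) :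
    (FreeGroup.lift id).comp (FreeGroup.map f) = f.comp (FreeGroup.lift id) := by
  ext; simp

theorem map_presKernel_le (f : H →* G) :
    (presKernel H).map (FreeGroup.map f) ≤ presKernel G := by
  rintro _ ⟨x, hx, rfl⟩
  rw [presKernel, MonoidHom.mem_ker, ← MonoidHom.comp_apply, FreeGroup.lift_id_comp_map,
    MonoidHom.comp_apply, MonoidHom.mem_ker.1 hx, map_one]

/-- Lifting back to `FreeGroup H` through a section of `f` gives a second lift of
`FreeGroup H → G`, which agrees with the identity on commutators modulo `[F, ker]`. -/
theorem mem_commutator_lift_ker_of_map_mem {f : H →* G} (hf : Function.Surjective f)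
    {x : FreeGroup H} (hx : x ∈ commutator (FreeGroup H))
    (hfx : FreeGroup.map f x ∈ ⁅(⊤ : Subgroup (FreeGroup G)), presKernel G⁆) :
    x ∈ ⁅(⊤ : Subgroup (FreeGroup H)), (FreeGroup.lift f).ker⁆ := by
  let s := Function.surjInv hf
  have hs : (FreeGroup.lift f).comp (FreeGroup.map s) = FreeGroup.lift id := by
    ext; simp [s, Function.surjInv_eq hf]
  have hsf : (FreeGroup.lift f).comp (FreeGroup.map (s ∘ f)) = FreeGroup.lift f := by
    ext; simp [s, Function.surjInv_eq hf]
  have hsection :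
      FreeGroup.map (s ∘ f) x ∈ ⁅(⊤ : Subgroup (FreeGroup H)), (FreeGroup.lift f).ker⁆ := by
    rw [← FreeGroup.map.comp]
    refine map_commutator_top_le _ ?_ ⟨_, hfx, rfl⟩
    rintro _ ⟨y, hy, rfl⟩
    rw [MonoidHom.mem_ker, ← MonoidHom.comp_apply, hs]
    exact hy
  have htwo_lifts : FreeGroup.map (s ∘ f) x * (MonoidHom.id _ x)⁻¹ ∈
      ⁅(⊤ : Subgroup (FreeGroup H)), (FreeGroup.lift f).ker⁆ :=
    mul_inv_mem_commutator_of_forall_mul_inv_mem _ _ _ (fun y => by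
      rw [MonoidHom.mem_ker, map_mul, map_inv, ← MonoidHom.comp_apply, hsf, MonoidHom.id_apply,
        mul_inv_cancel]) hx
  simpa using mul_mem (inv_mem htwo_lifts) hsection

end FreePresentation

namespace H2

variable {G H : Type u} [Group G] [Group H]

/-- The central extension `F/[F,R]` of `G`, inside which Hopf's formula places `H2 G`. -/
abbrev HopfCover (G : Type u) [Group G] : Type u :=
  FreeGroup G ⧸ ⁅(⊤ : Subgroup (FreeGroup G)), presKernel G⁆

def HopfCover.proj : HopfCover G →* G :=
  QuotientGroup.lift _ (FreeGroup.lift id) (commutator_le_right _ _)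

@[simp]
theorem HopfCover.proj_mk (x : FreeGroup G) :
    HopfCover.proj (x : HopfCover G) = FreeGroup.lift id x :=
  rfl

theorem HopfCover.proj_surjective : Function.Surjective (HopfCover.proj (G := G)) :=
  fun g => ⟨(FreeGroup.of g : FreeGroup G), FreeGroup.lift_apply_of⟩

theorem HopfCover.ker_proj_le_center : (HopfCover.proj (G := G)).ker ≤ center (HopfCover G) :=
  (QuotientGroup.ker_lift _ _ _).trans_le (map_mk'_le_center_quotient_commutator (presKernel G))

def toHopfCover : H2 G →* HopfCover G :=
  QuotientGroup.lift _ ((QuotientGroup.mk' _).comp (Subgroup.subtype _)) fun x hx => by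
    simpa [mem_subgroupOf] using hx

theorem toHopfCover_injective : Function.Injective (toHopfCover (G := G)) := by
  refine (QuotientGroup.injective_lift_iff _ _ _).2 ?_
  ext x
  simp [mem_subgroupOf]

def map (f : H →* G) : H2 H →* H2 G :=
  QuotientGroup.map _ _
    (((FreeGroup.map f).domRestrict _).codRestrict _ fun x =>
      ⟨map_presKernel_le f ⟨x, x.2.1, rfl⟩, (map_commutator_eq (f := FreeGroup.map f)).trans_le
        (commutator_mono le_top le_top) ⟨x, x.2.2, rfl⟩⟩)
    fun x hx => map_commutator_top_le _ (map_presKernel_le f) ⟨x, hx, rfl⟩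

theorem toHopfCover_mem_commutator_of_mem_ker_map {f : H →* G} (hf : Function.Surjective f)
    {x : H2 H} (hx : x ∈ (map f).ker) :
    toHopfCover x ∈ ⁅(⊤ : Subgroup (HopfCover H)), f.ker.comap HopfCover.proj⁆ := by
  obtain ⟨x, rfl⟩ := QuotientGroup.mk_surjective x
  have hxR := mem_commutator_lift_ker_of_map_mem hf x.2.2
    (mem_subgroupOf.1 ((QuotientGroup.eq_one_iff _).1 hx))
  refine map_commutator_top_le (QuotientGroup.mk' _) ?_ ⟨x, hxR, rfl⟩
  rintro _ ⟨r, hr, rfl⟩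
  have hlift : f.comp (FreeGroup.lift id) = FreeGroup.lift f := by ext; simp
  rw [mem_comap, MonoidHom.mem_ker, QuotientGroup.mk'_apply, HopfCover.proj_mk,
    ← MonoidHom.comp_apply, hlift]
  exact hr

theorem finite_of_surjective_of_ker_le_center {f : H →* G} (hf : Function.Surjective f)
    [Finite f.ker] (hcent : f.ker ≤ center H) [Group.FG (Abelianization H)] [Finite (H2 G)] :
    Finite (H2 H) := by
  have : Finite ↥⁅(⊤ : Subgroup (HopfCover H)), f.ker.comap HopfCover.proj⁆ :=
    finite_commutator_comap_of_ker_le_center HopfCover.proj_surjective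
      HopfCover.ker_proj_le_center hcent
  have : Finite (map f).ker :=
    Finite.of_injective
      (β := ↥⁅(⊤ : Subgroup (HopfCover H)), f.ker.comap HopfCover.proj⁆)
      (fun x => ⟨toHopfCover x, toHopfCover_mem_commutator_of_mem_ker_map hf x.2⟩)
      fun x y hxy => Subtype.ext (toHopfCover_injective (Subtype.ext_iff.1 hxy))
  exact (map f).finite_iff_finite_ker_range.2 ⟨this, inferInstance⟩

end H2

theorem finite_H2_of_central_extension_by_H2_general
    (G : Type u) (A : Type u) (Gu : Type u) [Group G] [Group A] [Group Gu]
    (k : ℕ) (hH1 : Nonempty (Additive (Abelianization G) ≃+ (Fin k → ℤ)))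
    (hH2 : Finite (H2 G))
    (i : A →* Gu) (π : Gu →* G)
    (hπ : Function.Surjective π)
    (hker : π.ker = i.range) (hcent : i.range ≤ Subgroup.center Gu)
    (hA : Nonempty (A ≃* H2 G)) :
    Finite (H2 Gu) := by
  obtain ⟨eH1⟩ := hH1
  obtain ⟨eA⟩ := hA
  have : Finite A := Finite.of_equiv _ eA.symm.toEquiv
  have : Finite π.ker := hker ▸ Finite.of_surjective _ i.rangeRestrict_surjective
  have : Group.FG (Abelianization G) :=
    GroupFG.iff_add_fg.2 <|
      AddGroup.fg_of_surjective (f := eH1.symm.toAddMonoidHom) eH1.symm.surjective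
  have : Group.FG (Abelianization Gu) := Abelianization.fg_of_surjective_of_finite_ker hπ
  exact H2.finite_of_surjective_of_ker_le_center hπ (hker ▸ hcent)

/-- If `H₁(G) ≅ ℤᵏ` and `H₂(G)` is finite, then for any central extension
`1 → A → G_u → G → 1` with `A ≅ H₂(G)` (e.g. a universal central extension),
the second homology `H₂(G_u)` is finite. -/
theorem finite_H2_of_central_extension_by_H2
    (G : Type u) (A : Type u) (Gu : Type u) [Group G] [Group A] [Group Gu]
    (k : ℕ) (hH1 : Nonempty (Additive (Abelianization G) ≃+ (Fin k → ℤ)))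
    (hH2 : Finite (H2 G))
    (i : A →* Gu) (π : Gu →* G)
    (hi : Function.Injective i) (hπ : Function.Surjective π)
    (hker : π.ker = i.range) (hcent : i.range ≤ Subgroup.center Gu)
    (hA : Nonempty (A ≃* H2 G)) :
    Finite (H2 Gu) :=
  finite_H2_of_central_extension_by_H2_general G A Gu k hH1 hH2 i π hπ hker hcent hA
end

section
/- Let 1 → A → G → H → 1 be a central extension of groups where A is finitely generated and H is finite. Then either the nonabelian tensor square G ⊗ G has a nontrivial torsion element, or G ⊗ G is a Bieberbach group of dimension k with k ≤ 2·rank(A ⊗_ℤ G_ab). -/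
universe u v w

/-- The defining relators of the nonabelian tensor square `G ⊗ G`. -/
def tensorSquareRels (G : Type u) [Group G] : Set (FreeGroup (G × G)) :=
  {r | ∃ g h k : G,
    r = FreeGroup.of (g * h, k) *
        (FreeGroup.of (g * h * g⁻¹, g * k * g⁻¹) * FreeGroup.of (g, k))⁻¹ ∨
    r = FreeGroup.of (g, h * k) *
        (FreeGroup.of (g, h) * FreeGroup.of (h * g * h⁻¹, h * k * h⁻¹))⁻¹}

/-- The nonabelian tensor square `G ⊗ G`. -/
def TensorSquare (G : Type u) [Group G] : Type u :=
  PresentedGroup (tensorSquareRels G)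

instance (G : Type u) [Group G] : Group (TensorSquare G) := by
  unfold TensorSquare; infer_instance

/-- The generator `g ⊗ h` of the nonabelian tensor square. -/
def tmul {G : Type u} [Group G] (g h : G) : TensorSquare G :=
  PresentedGroup.of (g, h)

/-- `Γ` is a Bieberbach group of dimension `k`: it is torsion-free and contains a finitely
generated maximal abelian torsion-free subgroup of finite index, free abelian of rank `k`. -/
def IsBieberbachOfDim (Γ : Type u) [Group Γ] (k : ℕ) : Prop :=
  (∀ x : Γ, IsOfFinOrder x → x = 1) ∧
  ∃ L : Subgroup Γ, L.FiniteIndex ∧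
    (∀ L' : Subgroup Γ, IsMulCommutative L' → L ≤ L' → L' = L) ∧
    Nonempty (L ≃* Multiplicative (Fin k → ℤ))

/-!
Since `A` is central of finite index, `G` has finitely many commutators, so its commutator
subgroup `G'` is finite by Schur's theorem. Conjugation in `G ⊗ G` is the action of `G` through
the commutator map `κ : G ⊗ G → G`, whose image is `G'`; hence `ker κ` is central of finite
index, and Schur's theorem again makes the commutator subgroup of `G ⊗ G` finite. If `G ⊗ G` is
torsion-free, it is therefore abelian. Commutators of `G` then act trivially and have finite
order, which forces `y ⊗ ⁅g, h⁆` and `⁅g, h⁆ ⊗ y` to be torsion, hence trivial; so `G` acts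
trivially and `⊗` is bilinear. Thus `G ⊗ G` is a quotient of `G_ab ⊗ G_ab`, a finitely
generated free abelian group. Finally, with `n = |H|` we have `(x ⊗ y)ⁿ = xⁿ ⊗ y = i(a) ⊗ y`,
so `n • (G ⊗ G)` lies in the image of `A ⊗ G_ab` and the rank of `G ⊗ G` is at most that of
`A ⊗ G_ab`.
-/

open scoped commutatorElement TensorProduct

section GroupTheory

variable {G : Type*} [Group G]

theorem Group.fg_of_fg_of_finiteIndex {N : Subgroup G} (hN : N.FG) [N.FiniteIndex] :
    Group.FG G := by
  obtain ⟨S, hS, hSfin⟩ := (Subgroup.fg_iff N).1 hN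
  refine Group.fg_iff.2 ⟨S ∪ Set.range fun q : G ⧸ N => q.out,
    eq_top_iff.2 fun g _ => ?_, hSfin.union (Set.finite_range _)⟩
  obtain ⟨n, hn⟩ := QuotientGroup.mk_out_eq_mul N g
  rw [← mul_inv_eq_iff_eq_mul.2 hn]
  exact mul_mem (Subgroup.subset_closure (Or.inr ⟨_, rfl⟩))
    (inv_mem (Subgroup.closure_mono Set.subset_union_left (hS ▸ n.2)))

theorem commutatorElement_mul_of_mem_center {a b z w : G} (hz : z ∈ Subgroup.center G)
    (hw : w ∈ Subgroup.center G) : ⁅a * z, b * w⁆ = ⁅a, b⁆ := by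
  rw [Subgroup.mem_center_iff] at hz hw
  calc ⁅a * z, b * w⁆ = a * (z * (b * w)) * z⁻¹ * a⁻¹ * (b * w)⁻¹ := by group
    _ = a * b * (w * a⁻¹) * w⁻¹ * b⁻¹ := by rw [← hz]; group
    _ = ⁅a, b⁆ := by rw [← hw]; group

theorem finite_commutatorSet_of_finiteIndex_center [(Subgroup.center G).FiniteIndex] :
    Finite (commutatorSet G) := by
  refine Set.Finite.subset
    (Set.finite_range fun p : (G ⧸ Subgroup.center G) × (G ⧸ Subgroup.center G) =>
      ⁅p.1.out, p.2.out⁆) ?_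
  rintro _ ⟨g, h, rfl⟩
  obtain ⟨z, hz⟩ := QuotientGroup.mk_out_eq_mul (Subgroup.center G) g
  obtain ⟨w, hw⟩ := QuotientGroup.mk_out_eq_mul (Subgroup.center G) h
  exact ⟨(g, h), by simp only [hz, hw, commutatorElement_mul_of_mem_center z.2 w.2]⟩

theorem Subgroup.isOfFinOrder_of_mem {K : Subgroup G} [Finite K] {x : G} (hx : x ∈ K) :
    IsOfFinOrder x :=
  K.subtype.isOfFinOrder (isOfFinOrder_of_finite (⟨x, hx⟩ : K))

theorem commutatorElement_mem_commutator (a b : G) : ⁅a, b⁆ ∈ commutator G :=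
  Subgroup.commutator_mem_commutator (Subgroup.mem_top a) (Subgroup.mem_top b)

theorem mul_comm_of_finite_commutator [Finite (commutator G)]
    (htf : ∀ x : G, IsOfFinOrder x → x = 1) (a b : G) : a * b = b * a :=
  commutatorElement_eq_one_iff_mul_comm.1 <| htf _ <|
    Subgroup.isOfFinOrder_of_mem (commutatorElement_mem_commutator a b)

end GroupTheory

theorem Module.finrank_le_of_smul_mem_range {R M N : Type*} [CommRing R] [IsDomain R]
    [AddCommGroup M] [Module R M] [AddCommGroup N] [Module R N] [Module.Finite R N]
    [Module.IsTorsionFree R M] (f : N →ₗ[R] M) {r : R} (hr : r ≠ 0)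
    (h : ∀ x, r • x ∈ LinearMap.range f) : finrank R M ≤ finrank R N :=
  calc finrank R M ≤ finrank R (LinearMap.range f) :=
        LinearMap.finrank_le_finrank_of_injective (f := (r • LinearMap.id).codRestrict _ h)
          fun _ _ hxy => smul_right_injective M hr (congrArg Subtype.val hxy)
    _ ≤ finrank R N := f.finrank_range_le

theorem isBieberbachOfDim_finrank {Γ : Type*} [CommGroup Γ] [IsMulTorsionFree Γ]
    [Module.Finite ℤ (Additive Γ)] : IsBieberbachOfDim Γ (Module.finrank ℤ (Additive Γ)) :=
  ⟨fun _ hx => hx.eq_one', ⊤, inferInstance, fun _ _ hL => top_le_iff.1 hL,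
    ⟨Subgroup.topEquiv.trans <|
      AddEquiv.toMultiplicativeRight (Module.finBasis ℤ (Additive Γ)).equivFun.toAddEquiv⟩⟩

section Bimultiplicative

variable {M N T : Type*} [CommGroup M] [CommGroup N] [CommGroup T]

def MonoidHom.tensorLift (β : M →* N →* T) :
    Additive M ⊗[ℤ] Additive N →ₗ[ℤ] Additive T :=
  TensorProduct.lift <| LinearMap.mk₂ ℤ (fun x y => Additive.ofMul (β x.toMul y.toMul))
    (by simp) (by simp) (by simp) (by simp)

@[simp]
theorem MonoidHom.tensorLift_tmul (β : M →* N →* T) (m : M) (n : N) :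
    β.tensorLift (Additive.ofMul m ⊗ₜ Additive.ofMul n) = Additive.ofMul (β m n) :=
  rfl

end Bimultiplicative

def Abelianization.lift₂ {G T : Type*} [Group G] [CommGroup T] (β : G →* G →* T) :
    Abelianization G →* Abelianization G →* T :=
  (Abelianization.lift (Abelianization.lift β).flip).flip

@[simp]
theorem Abelianization.lift₂_of {G T : Type*} [Group G] [CommGroup T] (β : G →* G →* T)
    (x y : G) :
    Abelianization.lift₂ β (.of x) (.of y) = β x y := by
  simp [Abelianization.lift₂]

theorem Submodule.eq_top_of_closure_eq_top {T : Type*} [CommGroup T] {S : Set T}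
    (hS : Subgroup.closure S = ⊤) (P : Submodule ℤ (Additive T))
    (hP : ∀ t ∈ S, Additive.ofMul t ∈ P) : P = ⊤ := by
  suffices ∀ t, Additive.ofMul t ∈ P from eq_top_iff.2 fun x _ => this x.toMul
  intro t
  induction (hS ▸ Subgroup.mem_top t : t ∈ Subgroup.closure S)
    using Subgroup.closure_induction with
  | mem t ht => exact hP t ht
  | one => exact P.zero_mem
  | mul _ _ _ _ ha hb => exact P.add_mem ha hb
  | inv _ _ ha => exact P.neg_mem ha

-- Instance synthesis equips `M ⊗[ℤ] N` with `AddCommGroup.toIntModule`, not with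
-- `TensorProduct.instModule`, so the library instance does not apply as it stands.
instance Module.Finite.tensorProduct_int {M N : Type*} [AddCommGroup M] [AddCommGroup N]
    [Module.Finite ℤ M] [Module.Finite ℤ N] : Module.Finite ℤ (M ⊗[ℤ] N) :=
  Subsingleton.elim (α := Module ℤ (M ⊗[ℤ] N)) TensorProduct.instModule
    (AddCommGroup.toIntModule _) ▸ Module.Finite.tensorProduct ℤ M N

instance {G : Type*} [Group G] [Group.FG G] : Module.Finite ℤ (Additive (Abelianization G)) :=
  have : Group.FG (Abelianization G) :=
    Group.fg_of_surjective (f := Abelianization.of) QuotientGroup.mk_surjective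
  Module.Finite.iff_addGroup_fg.2 inferInstance

section Generated

variable {G T : Type*} [Group G] [CommGroup T] (β : G →* G →* T)
  (hβ : Subgroup.closure (Set.range fun p : G × G => β p.1 p.2) = ⊤)
include hβ

theorem module_finite_of_closure_range_eq_top [Group.FG G] : Module.Finite ℤ (Additive T) :=
  Module.Finite.of_surjective (Abelianization.lift₂ β).tensorLift <| LinearMap.range_eq_top.1 <|
    Submodule.eq_top_of_closure_eq_top hβ _ <| by
      rintro _ ⟨⟨x, y⟩, rfl⟩
      exact ⟨.ofMul (.of x) ⊗ₜ .ofMul (.of y), by simp⟩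

theorem finrank_le_of_pow_mem_range {A : Type*} [CommGroup A] [Group.FG A] [Group.FG G]
    [IsMulTorsionFree T] (i : A →* G) {n : ℕ} (hn : n ≠ 0) (hpow : ∀ x, x ^ n ∈ i.range) :
    Module.finrank ℤ (Additive T) ≤
      Module.finrank ℤ (Additive A ⊗[ℤ] Additive (Abelianization G)) := by
  set Θ := ((Abelianization.lift₂ β).comp (Abelianization.of.comp i)).tensorLift
  refine Module.finrank_le_of_smul_mem_range Θ (r := n) (by exact_mod_cast hn) fun x => ?_
  suffices (LinearMap.range Θ).comap ((n : ℤ) • LinearMap.id) = ⊤ by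
    simpa using this.ge (Submodule.mem_top (x := x))
  refine Submodule.eq_top_of_closure_eq_top hβ _ ?_
  rintro _ ⟨⟨x, y⟩, rfl⟩
  obtain ⟨a, ha⟩ := hpow x
  refine ⟨.ofMul a ⊗ₜ .ofMul (.of y), ?_⟩
  simp [Θ, ha]

end Generated

namespace TensorSquare

variable {G : Type u} [Group G]

theorem mul_tmul_conj (g h k : G) :
    tmul (g * h) k = tmul (g * h * g⁻¹) (g * k * g⁻¹) * tmul g k :=
  mul_inv_eq_one.1 <| PresentedGroup.one_of_mem ⟨g, h, k, Or.inl rfl⟩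

theorem tmul_mul_conj (g h k : G) :
    tmul g (h * k) = tmul g h * tmul (h * g * h⁻¹) (h * k * h⁻¹) :=
  mul_inv_eq_one.1 <| PresentedGroup.one_of_mem ⟨g, h, k, Or.inr rfl⟩

theorem closure_range_tmul : Subgroup.closure (Set.range fun p : G × G => tmul p.1 p.2) = ⊤ :=
  PresentedGroup.closure_range_of _

theorem hom_ext {T : Type*} [Group T] {f f' : TensorSquare G →* T}
    (h : ∀ x y : G, f (tmul x y) = f' (tmul x y)) : f = f' :=
  PresentedGroup.ext fun p => h p.1 p.2

def act (w : G) : TensorSquare G →* TensorSquare G :=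
  PresentedGroup.toGroup (f := fun p : G × G => tmul (MulAut.conj w p.1) (MulAut.conj w p.2)) <| by
    rintro _ ⟨g, h, k, rfl | rfl⟩ <;> simp only [map_mul, map_inv, FreeGroup.lift_apply_of]
    · rw [mul_tmul_conj (MulAut.conj w g), mul_inv_cancel]
    · rw [tmul_mul_conj (MulAut.conj w g), mul_inv_cancel]

@[simp]
theorem act_tmul (w x y : G) : act w (tmul x y) = tmul (w * x * w⁻¹) (w * y * w⁻¹) :=
  PresentedGroup.toGroup.of _

theorem act_act (v w : G) (z : TensorSquare G) : act v (act w z) = act (v * w) z := by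
  have : (act v).comp (act w) = act (v * w) := hom_ext fun x y => by simp [mul_assoc]
  exact DFunLike.congr_fun this z

@[simp]
theorem act_one (z : TensorSquare G) : act 1 z = z := by
  have : act (1 : G) = MonoidHom.id _ := hom_ext fun x y => by simp
  exact DFunLike.congr_fun this z

theorem mul_tmul (g h k : G) : tmul (g * h) k = act g (tmul h k) * tmul g k := by
  rw [act_tmul, mul_tmul_conj]

theorem tmul_mul (g h k : G) : tmul g (h * k) = tmul g h * act h (tmul g k) := by
  rw [act_tmul, tmul_mul_conj]

@[simp]
theorem one_tmul (y : G) : tmul 1 y = 1 := by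
  simpa using mul_tmul (1 : G) 1 y

@[simp]
theorem tmul_one (y : G) : tmul y 1 = 1 := by
  simpa using tmul_mul y 1 1

def commutatorHom : TensorSquare G →* G :=
  PresentedGroup.toGroup (f := fun p : G × G => ⁅p.1, p.2⁆) <| by
    rintro _ ⟨g, h, k, rfl | rfl⟩ <;>
      simp only [map_mul, map_inv, FreeGroup.lift_apply_of, commutatorElement_def] <;> group

@[simp]
theorem commutatorHom_tmul (g h : G) : commutatorHom (tmul g h) = ⁅g, h⁆ :=
  PresentedGroup.toGroup.of _

-- Expand `gh ⊗ kl` in the two possible orders and cancel.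
theorem tmul_mul_act_tmul (g k h l : G) :
    tmul g k * act (k * g) (tmul h l) = act (g * k) (tmul h l) * tmul g k := by
  have expand₁ : tmul (g * h) (k * l) =
      act g (tmul h k) * (act (g * k) (tmul h l) * (tmul g k * act k (tmul g l))) := by
    rw [mul_tmul g h (k * l), tmul_mul h k l, tmul_mul g k l, map_mul, act_act]
    group
  have expand₂ : tmul (g * h) (k * l) =
      act g (tmul h k) * (tmul g k * (act (k * g) (tmul h l) * act k (tmul g l))) := by
    rw [tmul_mul (g * h) k l, mul_tmul g h k, mul_tmul g h l, map_mul, act_act]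
    group
  have := mul_left_cancel (expand₁.symm.trans expand₂)
  rw [← mul_assoc, ← mul_assoc] at this
  exact (mul_right_cancel this).symm

theorem tmul_mul_act_mul_inv (g k : G) (z : TensorSquare G) :
    tmul g k * act (k * g) z * (tmul g k)⁻¹ = act (g * k) z := by
  have : (MulAut.conj (tmul g k)).toMonoidHom.comp (act (k * g)) = act (g * k) :=
    hom_ext fun x y => by
      simp only [MonoidHom.comp_apply, MulEquiv.coe_toMonoidHom, MulAut.conj_apply,
        tmul_mul_act_tmul, mul_inv_cancel_right]
  exact DFunLike.congr_fun this z

theorem tmul_mul_mul_inv (x y : G) (z : TensorSquare G) :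
    tmul x y * z * (tmul x y)⁻¹ = act ⁅x, y⁆ z := by
  conv_lhs => rw [← act_one z, ← mul_inv_cancel (y * x), ← act_act]
  rw [tmul_mul_act_mul_inv, act_act, commutatorElement_def]
  group

theorem mul_mul_inv_eq_act (m z : TensorSquare G) : m * z * m⁻¹ = act (commutatorHom m) z := by
  have hm : m ∈ Subgroup.closure (Set.range fun p : G × G => tmul p.1 p.2) :=
    closure_range_tmul (G := G) ▸ Subgroup.mem_top m
  induction hm using Subgroup.closure_induction generalizing z with
  | mem _ hm =>
    obtain ⟨⟨x, y⟩, rfl⟩ := hm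
    simpa using tmul_mul_mul_inv x y z
  | one => simp
  | mul a b _ _ ha hb =>
    rw [map_mul, ← act_act, ← hb, ← ha]
    group
  | inv a _ ha =>
    calc a⁻¹ * z * a⁻¹⁻¹
        = act (commutatorHom a)⁻¹ (act (commutatorHom a) (a⁻¹ * z * a)) := by
          rw [act_act, inv_mul_cancel, act_one, inv_inv]
      _ = act (commutatorHom a⁻¹) z := by
          rw [← ha, map_inv]
          group

theorem ker_commutatorHom_le_center :
    (commutatorHom : TensorSquare G →* G).ker ≤ Subgroup.center (TensorSquare G) := by
  refine fun m hm => Subgroup.mem_center_iff.2 fun z => ?_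
  have := mul_mul_inv_eq_act m z
  rw [MonoidHom.mem_ker.1 hm, act_one, mul_inv_eq_iff_eq_mul] at this
  exact this.symm

theorem range_commutatorHom : (commutatorHom : TensorSquare G →* G).range = commutator G := by
  rw [MonoidHom.range_eq_map, ← closure_range_tmul, MonoidHom.map_closure, commutator_eq_closure,
    ← Set.range_comp]
  congr 1
  ext
  simp [commutatorSet]

theorem tmul_pow_of_act_eq_self {c : G} (hc : ∀ z, act c z = z) (y : G) (n : ℕ) :
    tmul y (c ^ n) = tmul y c ^ n := by
  induction n with
  | zero => simp
  | succ n ih => rw [pow_succ', tmul_mul, hc, ih, pow_succ']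

theorem pow_tmul_of_act_eq_self {c : G} (hc : ∀ z, act c z = z) (y : G) (n : ℕ) :
    tmul (c ^ n) y = tmul c y ^ n := by
  induction n with
  | zero => simp
  | succ n ih => rw [pow_succ', mul_tmul, hc, ih, pow_succ]

section TorsionFree

variable [Finite (commutator G)] (htf : ∀ x : TensorSquare G, IsOfFinOrder x → x = 1)
include htf

theorem mul_comm_of_torsionFree (a b : TensorSquare G) : a * b = b * a := by
  have : Finite (commutatorHom : TensorSquare G →* G).range :=
    range_commutatorHom (G := G) ▸ inferInstance
  have : (Subgroup.center (TensorSquare G)).FiniteIndex :=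
    Subgroup.finiteIndex_of_le ker_commutatorHom_le_center
  have := finite_commutatorSet_of_finiteIndex_center (G := TensorSquare G)
  exact mul_comm_of_finite_commutator htf a b

theorem act_commutatorElement_eq_self (g h : G) (z : TensorSquare G) : act ⁅g, h⁆ z = z := by
  rw [← commutatorHom_tmul, ← mul_mul_inv_eq_act, mul_comm_of_torsionFree htf,
    inv_mul_cancel_left]

theorem tmul_commutatorElement (y g h : G) : tmul y ⁅g, h⁆ = 1 := by
  obtain ⟨n, hn, hpow⟩ := isOfFinOrder_iff_pow_eq_one.1 <|
    Subgroup.isOfFinOrder_of_mem (commutatorElement_mem_commutator g h)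
  refine htf _ (isOfFinOrder_iff_pow_eq_one.2 ⟨n, hn, ?_⟩)
  rw [← tmul_pow_of_act_eq_self (act_commutatorElement_eq_self htf g h), hpow, tmul_one]

theorem commutatorElement_tmul (y g h : G) : tmul ⁅g, h⁆ y = 1 := by
  obtain ⟨n, hn, hpow⟩ := isOfFinOrder_iff_pow_eq_one.1 <|
    Subgroup.isOfFinOrder_of_mem (commutatorElement_mem_commutator g h)
  refine htf _ (isOfFinOrder_iff_pow_eq_one.2 ⟨n, hn, ?_⟩)
  rw [← pow_tmul_of_act_eq_self (act_commutatorElement_eq_self htf g h), hpow, one_tmul]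

theorem act_eq_self (w : G) (z : TensorSquare G) : act w z = z := by
  have : act w = MonoidHom.id _ := hom_ext fun g h => by
    have conj_eq (x : G) : w * x * w⁻¹ = ⁅w, x⁆ * x := by rw [commutatorElement_def]; group
    rw [act_tmul, conj_eq, conj_eq, mul_tmul, act_commutatorElement_eq_self htf,
      commutatorElement_tmul htf, mul_one, tmul_mul, act_commutatorElement_eq_self htf,
      tmul_commutatorElement htf, one_mul, MonoidHom.id_apply]
  exact DFunLike.congr_fun this z

theorem mul_tmul_of_torsionFree (g h k : G) : tmul (g * h) k = tmul g k * tmul h k := by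
  rw [mul_tmul, act_eq_self htf, mul_comm_of_torsionFree htf]

theorem tmul_mul_of_torsionFree (g h k : G) : tmul g (h * k) = tmul g h * tmul g k := by
  rw [tmul_mul, act_eq_self htf]

end TorsionFree

end TensorSquare

theorem exists_isBieberbachOfDim_le_finrank {A : Type v} {G : Type u} {H : Type w} [CommGroup A]
    [Group G] [Group H] [Group.FG A] [Finite H] (i : A →* G) (π : G →* H)
    (hker : π.ker = i.range) (hcent : i.range ≤ Subgroup.center G)
    (htf : ∀ x : TensorSquare G, IsOfFinOrder x → x = 1) :
    ∃ k : ℕ, IsBieberbachOfDim (TensorSquare G) k ∧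
      k ≤ Module.finrank ℤ (TensorProduct ℤ (Additive A) (Additive (Abelianization G))) := by
  have : i.range.FiniteIndex := hker ▸ inferInstance
  have : Group.FG G :=
    Group.fg_of_fg_of_finiteIndex ((Group.fg_iff_subgroup_fg i.range).1 inferInstance)
  have : (Subgroup.center G).FiniteIndex := Subgroup.finiteIndex_of_le hcent
  have := finite_commutatorSet_of_finiteIndex_center (G := G)
  let : CommGroup (TensorSquare G) := { mul_comm := TensorSquare.mul_comm_of_torsionFree htf }
  have : IsMulTorsionFree (TensorSquare G) := .of_not_isOfFinOrder fun x hx h => hx (htf x h)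
  let β : G →* G →* TensorSquare G :=
    MonoidHom.mk' (fun x => MonoidHom.mk' (tmul x) (TensorSquare.tmul_mul_of_torsionFree htf x))
      fun x y => MonoidHom.ext (TensorSquare.mul_tmul_of_torsionFree htf x y)
  have hβ : Subgroup.closure (Set.range fun p : G × G => β p.1 p.2) = ⊤ :=
    TensorSquare.closure_range_tmul
  have := module_finite_of_closure_range_eq_top β hβ
  refine ⟨_, isBieberbachOfDim_finrank,
    finrank_le_of_pow_mem_range β hβ i (n := Nat.card H) Nat.card_pos.ne' fun x => ?_⟩
  rw [← hker, MonoidHom.mem_ker, map_pow, pow_card_eq_one']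

theorem tensorSquare_torsion_or_bieberbach_general
    (A : Type v) (G : Type u) (H : Type w) [CommGroup A] [Group G] [Group H]
    (i : A →* G) (π : G →* H)
    (hker : π.ker = i.range) (hcent : i.range ≤ Subgroup.center G)
    (hA : Group.FG A) (hH : Finite H) :
    (∃ t : TensorSquare G, t ≠ 1 ∧ IsOfFinOrder t) ∨
    ∃ k : ℕ, IsBieberbachOfDim (TensorSquare G) k ∧
      k ≤ 2 * Module.finrank ℤ
        (TensorProduct ℤ (Additive A) (Additive (Abelianization G))) := by
  by_cases htorsion : ∃ t : TensorSquare G, t ≠ 1 ∧ IsOfFinOrder t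
  · exact .inl htorsion
  · obtain ⟨k, hk, hle⟩ := exists_isBieberbachOfDim_le_finrank i π hker hcent
      fun x hx => not_not.1 fun hx1 => htorsion ⟨x, hx1, hx⟩
    exact .inr ⟨k, hk, hle.trans (Nat.le_mul_of_pos_left _ two_pos)⟩

/-- For a central extension `1 → A → G → H → 1` with `A` finitely
generated and `H` finite, the tensor square `G ⊗ G` either has a nontrivial torsion
element, or is a Bieberbach group of dimension `k ≤ 2 · rank (A ⊗_ℤ G_ab)`. -/
theorem tensorSquare_torsion_or_bieberbach
    (A : Type v) (G : Type u) (H : Type w) [CommGroup A] [Group G] [Group H]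
    (i : A →* G) (π : G →* H)
    (hi : Function.Injective i) (hπ : Function.Surjective π)
    (hker : π.ker = i.range) (hcent : i.range ≤ Subgroup.center G)
    (hA : Group.FG A) (hH : Finite H) :
    (∃ t : TensorSquare G, t ≠ 1 ∧ IsOfFinOrder t) ∨
    ∃ k : ℕ, IsBieberbachOfDim (TensorSquare G) k ∧
      k ≤ 2 * Module.finrank ℤ
        (TensorProduct ℤ (Additive A) (Additive (Abelianization G))) :=
  tensorSquare_torsion_or_bieberbach_general A G H i π hker hcent hA hH
end

section
/- Let G̃ be a group such that H₁(G̃) ≅ ℤ, H₂(G̃) is finite, and G̃ contains a nontrivial finite subgroup (equivalently, a nontrivial torsion element). Then G̃ is not circularly orderable. (In particular, the universal central extension of a virtual knot group with nontrivial finite second homology is not circularly orderable.) -/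
universe u

/-!
Cutting a left-invariant circular order of `G` at `1` gives a linear order with least element `1`
whose cyclic betweenness is invariant under left multiplication; the circular order cocycle is
the coboundary of the sign function of this order. Left multiplication by `k` then lifts to an
order automorphism of the unrolled circle `ℤ ×ₗ G` commuting with the shift, and the lifts of `g`
and `h` compose to the lift of `g * h` up to a power of the shift. On the free group `F` on `G`
this gives a homomorphism `ψ` into the torsion-free group of order automorphisms of `ℤ ×ₗ G`,
sending the relators `R` to powers of the shift, which commute with the image of `ψ`, and with
`ker ψ ≤ R`.

A torsion element `a` lies in `[G, G]` because `H₁(G) ≅ ℤ` is torsion-free, so it lifts to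
`w ∈ [F, F]`, and some power of `w` lies in `R ⊓ [F, F]`. As `H₂(G) = (R ⊓ [F, F]) / [F, R]` is
finite, a further power lies in `[F, R] ≤ ker ψ`. Thus `ψ w` has finite order, so `ψ w = 1`,
`w ∈ R` and `a = 1`.
-/

open Function

section LinearOrder

variable {α : Type*} [LinearOrder α]

def CyclicLT (a b c : α) : Prop :=
  a < b ∧ b < c ∨ b < c ∧ c < a ∨ c < a ∧ a < b

def cmpSign (a b : α) : ℤ :=
  if a < b then 1 else if b < a then -1 else 0

theorem cmpSign_coboundary_eq_one_iff (a b c : α) :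
    cmpSign b c - cmpSign a c + cmpSign a b = 1 ↔ CyclicLT a b c := by
  unfold cmpSign CyclicLT
  split_ifs <;> grind

end LinearOrder

namespace OrderIso

section LinearOrder

variable {α : Type*} [LinearOrder α]

theorem coe_pow (φ : α ≃o α) (n : ℕ) : ⇑(φ ^ n) = φ^[n] := by
  induction n with
  | zero => rfl
  | succ n ih => rw [pow_succ, RelIso.coe_mul, ih, iterate_succ]

theorem eq_one_of_isOfFinOrder {φ : α ≃o α} (h : IsOfFinOrder φ) : φ = 1 := by
  obtain ⟨n, hn, hφn⟩ := isOfFinOrder_iff_pow_eq_one.mp h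
  ext x
  have hx : φ^[n] x = id^[n] x := by rw [← coe_pow, hφn, iterate_id]; rfl
  exact (Function.Commute.id_right (f := φ)).iterate_pos_eq_iff_map_eq φ.monotone strictMono_id hn
    |>.mp hx

end LinearOrder

section Preorder

variable {α : Type*} [Preorder α]

def lexShift : ℤ ×ₗ α ≃o ℤ ×ₗ α where
  toFun x := toLex ((ofLex x).1 + 1, (ofLex x).2)
  invFun x := toLex ((ofLex x).1 - 1, (ofLex x).2)
  left_inv x := by simp
  right_inv x := by simp
  map_rel_iff' {x y} := by simp [Prod.Lex.le_iff]

theorem lexShift_apply (x : ℤ ×ₗ α) :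
    lexShift x = toLex ((ofLex x).1 + 1, (ofLex x).2) := rfl

theorem lexShift_inv_apply (x : ℤ ×ₗ α) :
    lexShift⁻¹ x = toLex ((ofLex x).1 - 1, (ofLex x).2) := rfl

theorem lexShift_zpow_apply (m : ℤ) (x : ℤ ×ₗ α) :
    (lexShift ^ m) x = toLex ((ofLex x).1 + m, (ofLex x).2) := by
  induction m using Int.induction_on generalizing x with
  | zero => rw [zpow_zero, RelIso.one_apply, add_zero]; rfl
  | succ n ih =>
    rw [zpow_add_one, RelIso.mul_apply, ih, lexShift_apply, ofLex_toLex]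
    congr 2; ring
  | pred n ih =>
    rw [zpow_sub_one, RelIso.mul_apply, ih, lexShift_inv_apply, ofLex_toLex]
    congr 2; ring

theorem eq_of_le_of_lt_lexShift {u v w : ℤ ×ₗ α} (huv : u ≤ v) (hv : v < lexShift u)
    (huw : u ≤ w) (hw : w < lexShift u) (h : (ofLex v).2 = (ofLex w).2) : v = w := by
  simp only [lexShift, RelIso.coe_fn_mk, Equiv.coe_fn_mk, Prod.Lex.le_iff, Prod.Lex.lt_iff,
    ofLex_toLex] at huv hv huw hw
  refine ofLex.injective (Prod.ext ?_ h)
  rcases huv with huv | huv <;> rcases hv with hv | hv <;> rcases huw with huw | huw <;>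
    rcases hw with hw | hw <;> grind

theorem ext_of_commute_lexShift {b : α} (hb : IsBot b) {φ ψ : ℤ ×ₗ α ≃o ℤ ×ₗ α}
    (hφ : Commute φ lexShift) (hψ : Commute ψ lexShift)
    (hsnd : ∀ x, (ofLex (φ x)).2 = (ofLex (ψ x)).2)
    (hbase : φ (toLex (0, b)) = ψ (toLex (0, b))) : φ = ψ := by
  ext x
  obtain ⟨⟨m, a⟩, rfl⟩ := toLex.surjective x
  -- `φ` and `ψ` agree at `(m, b)` and map `[(m, b), shift (m, b))` into the same interval,
  -- on which a point is determined by its second coordinate.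
  have hx : toLex (m, b) = (lexShift ^ m) (toLex (0, b)) := by simp [lexShift_zpow_apply]
  have hlo : toLex (m, b) ≤ toLex (m, a) := Prod.Lex.toLex_le_toLex.mpr (.inr ⟨rfl, hb a⟩)
  have hhi : toLex (m, a) < lexShift (toLex (m, b)) := by simp [lexShift, Prod.Lex.toLex_lt_toLex]
  have hbase' : φ (toLex (m, b)) = ψ (toLex (m, b)) := by
    rw [hx, ← RelIso.mul_apply, ← RelIso.mul_apply, (hφ.zpow_right m).eq, (hψ.zpow_right m).eq,
      RelIso.mul_apply, RelIso.mul_apply, hbase]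
  refine eq_of_le_of_lt_lexShift (φ.monotone hlo) ?_ (hbase' ▸ ψ.monotone hlo) ?_ (hsnd _)
  · rw [← RelIso.mul_apply, ← hφ.eq]; exact φ.strictMono hhi
  · rw [hbase', ← RelIso.mul_apply, ← hψ.eq]; exact ψ.strictMono hhi

end Preorder

end OrderIso

open OrderIso

class IsCutCircularOrder (G : Type*) [Group G] [LinearOrder G] : Prop where
  isBot_one : IsBot (1 : G)
  cyclicLT_mul_left (k : G) {a b c : G} : CyclicLT a b c → CyclicLT (k * a) (k * b) (k * c)

structure CircularOrderCocycle_s12 (G : Type*) [Group G] where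
  c : G → G → G → ℤ
  c_mem : ∀ x y z, c x y z = -1 ∨ c x y z = 0 ∨ c x y z = 1
  c_eq_zero_iff : ∀ x y z, c x y z = 0 ↔ x = y ∨ x = z ∨ y = z
  c_cocycle : ∀ w x y z, c x y z - c w y z + c w x z - c w x y = 0
  c_mul_left : ∀ k x y z, c x y z = c (k * x) (k * y) (k * z)

namespace CircularOrderCocycle_s12

variable {G : Type*} [Group G] (d : CircularOrderCocycle_s12 G)

theorem c_self_left (x y : G) : d.c x x y = 0 := (d.c_eq_zero_iff _ _ _).mpr (.inl rfl)

theorem c_self_outer (x y : G) : d.c x y x = 0 := (d.c_eq_zero_iff _ _ _).mpr (.inr (.inl rfl))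

theorem c_self_right (x y : G) : d.c x y y = 0 := (d.c_eq_zero_iff _ _ _).mpr (.inr (.inr rfl))

theorem c_swap_s12 (x y z : G) : d.c x z y = -d.c x y z := by
  have := d.c_cocycle x y z y
  rw [d.c_self_outer, d.c_self_right] at this
  omega

def CutLT (g h : G) : Prop := d.c 1 g h = 1 ∨ g = 1 ∧ h ≠ 1

theorem cutLT_of_ne_one {g h : G} (hg : g ≠ 1) : d.CutLT g h ↔ d.c 1 g h = 1 := by
  simp [CutLT, hg]

theorem cutLT_one {g : G} (hg : g ≠ 1) : d.CutLT 1 g := .inr ⟨rfl, hg⟩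

theorem not_cutLT_one (g : G) : ¬ d.CutLT g 1 := by
  simp [CutLT, d.c_self_outer]

instance : IsStrictTotalOrder G d.CutLT where
  irrefl g := by simp [CutLT, d.c_self_right]
  trans g h k hgh hhk := by
    rcases eq_or_ne g 1 with rfl | hg
    · exact d.cutLT_one (by rintro rfl; exact d.not_cutLT_one h hhk)
    have hh : h ≠ 1 := by rintro rfl; exact d.not_cutLT_one g hgh
    rw [d.cutLT_of_ne_one hg] at hgh ⊢
    rw [d.cutLT_of_ne_one hh] at hhk
    have := d.c_cocycle 1 g h k
    rcases d.c_mem g h k with h1 | h1 | h1 <;> rcases d.c_mem 1 g k with h2 | h2 | h2 <;> omega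
  trichotomous g h hgh hhg := by
    by_contra hne
    rcases eq_or_ne g 1 with rfl | hg
    · exact hgh (d.cutLT_one (Ne.symm hne))
    rcases eq_or_ne h 1 with rfl | hh
    · exact hhg (d.cutLT_one hg)
    rw [d.cutLT_of_ne_one hg] at hgh
    rw [d.cutLT_of_ne_one hh, d.c_swap_s12] at hhg
    have := (d.c_eq_zero_iff 1 g h).not.mpr (by tauto)
    rcases d.c_mem 1 g h with h1 | h1 | h1 <;> omega

section LinearOrder

variable [LinearOrder G]

theorem c_one_eq_coboundary_cmpSign (hlt : ∀ g h : G, g < h ↔ d.CutLT g h) (a b : G) :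
    d.c 1 a b = cmpSign 1 a - cmpSign 1 b + cmpSign a b := by
  have one_lt {g : G} (hg : g ≠ 1) : 1 < g := (hlt 1 g).mpr (d.cutLT_one hg)
  rcases eq_or_ne a 1 with rfl | ha
  · simp [d.c_self_left, cmpSign]
  rcases eq_or_ne b 1 with rfl | hb
  · simp [d.c_self_outer, cmpSign, one_lt ha, (one_lt ha).not_gt]
  simp only [cmpSign, one_lt ha, one_lt hb, if_true, hlt, d.cutLT_of_ne_one ha,
    d.cutLT_of_ne_one hb]
  split_ifs with hab hba
  · omega
  · rw [d.c_swap_s12, hba]; rfl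
  · rw [d.c_swap_s12] at hba
    rcases d.c_mem 1 a b with h | h | h <;> omega

theorem c_eq_coboundary_cmpSign (hlt : ∀ g h : G, g < h ↔ d.CutLT g h) (x y z : G) :
    d.c x y z = cmpSign y z - cmpSign x z + cmpSign x y := by
  have := d.c_cocycle 1 x y z
  simp only [d.c_one_eq_coboundary_cmpSign hlt] at this
  linarith

theorem isCutCircularOrder (hlt : ∀ g h : G, g < h ↔ d.CutLT g h) : IsCutCircularOrder G where
  isBot_one g := by
    rcases eq_or_ne g 1 with rfl | hg
    · exact le_rfl
    · exact ((hlt 1 g).mpr (d.cutLT_one hg)).le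
  cyclicLT_mul_left k a b c := by
    simp only [← cmpSign_coboundary_eq_one_iff, ← d.c_eq_coboundary_cmpSign hlt, ← d.c_mul_left]
    exact id

end LinearOrder

end CircularOrderCocycle_s12

theorem IsCircularlyOrderable.exists_isCutCircularOrder {G : Type*} [Group G]
    (h : IsCircularlyOrderable G) : ∃ _ : LinearOrder G, IsCutCircularOrder G := by
  classical
  obtain ⟨c, hmem, hzero, hcocycle, hmul⟩ := h
  let d : CircularOrderCocycle_s12 G := ⟨c, hmem, hzero, hcocycle, hmul⟩
  let _ := linearOrderOfSTO d.CutLT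
  exact ⟨_, d.isCutCircularOrder fun _ _ => Iff.rfl⟩

namespace IsCutCircularOrder

variable {G : Type*} [Group G] [LinearOrder G]

def wrap (k g : G) : ℤ := if k * g < k then 1 else 0

theorem wrap_one_right (k : G) : wrap k 1 = 0 := by simp [wrap]

def liftMulFun (k : G) (x : ℤ ×ₗ G) : ℤ ×ₗ G :=
  toLex ((ofLex x).1 + wrap k (ofLex x).2, k * (ofLex x).2)

theorem liftMulFun_surjective (k : G) : Surjective (liftMulFun k) := fun y =>
  ⟨toLex ((ofLex y).1 - wrap k (k⁻¹ * (ofLex y).2), k⁻¹ * (ofLex y).2), by simp [liftMulFun]⟩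

variable [IsCutCircularOrder G]

theorem one_le (g : G) : 1 ≤ g := isBot_one g

theorem wrap_one_left (g : G) : wrap 1 g = 0 := by
  simp [wrap, (one_le g).not_gt]

theorem mul_lt_mul_left_or_wrap_lt {g h : G} (k : G) (hgh : g < h) :
    wrap k g = wrap k h ∧ k * g < k * h ∨ wrap k g < wrap k h := by
  rcases (one_le g).eq_or_lt with rfl | hg
  · rcases lt_trichotomy (k * h) k with hk | hk | hk
    · simp [wrap, hk]
    · exact absurd (mul_eq_left.mp hk) hgh.ne'
    · simp [wrap, hk, hk.not_gt]
  · have hcyc : CyclicLT (k * 1) (k * g) (k * h) := cyclicLT_mul_left k (.inl ⟨hg, hgh⟩)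
    rw [mul_one] at hcyc
    rcases hcyc with ⟨h1, h2⟩ | ⟨h1, h2⟩ | ⟨h1, h2⟩
    · simp [wrap, h1.not_gt, (h1.trans h2).not_gt, h2]
    · simp [wrap, h2, (h1.trans h2), h1]
    · simp [wrap, h1, h2.not_gt]

theorem strictMono_liftMulFun (k : G) : StrictMono (liftMulFun k) := by
  intro x y hxy
  simp only [liftMulFun, Prod.Lex.toLex_lt_toLex]
  rcases Prod.Lex.lt_iff.mp hxy with hlt | ⟨heq, hlt⟩
  · by_cases hwrap : (ofLex x).1 + wrap k (ofLex x).2 < (ofLex y).1 + wrap k (ofLex y).2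
    · exact .inl hwrap
    · have hx : k * (ofLex x).2 < k := by unfold wrap at hwrap; split_ifs at hwrap <;> omega
      have hy : ¬ k * (ofLex y).2 < k := by unfold wrap at hwrap; split_ifs at hwrap <;> omega
      refine .inr ⟨?_, hx.trans_le (not_lt.mp hy)⟩
      simp only [wrap, hx, hy, if_true, if_false] at hwrap ⊢
      omega
  · rw [heq]
    rcases mul_lt_mul_left_or_wrap_lt k hlt with ⟨hw, hk⟩ | hw
    · exact .inr ⟨by rw [hw], hk⟩
    · exact .inl (by omega)

noncomputable def liftMul (k : G) : ℤ ×ₗ G ≃o ℤ ×ₗ G :=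
  (strictMono_liftMulFun k).orderIsoOfSurjective _ (liftMulFun_surjective k)

theorem liftMul_apply (k : G) (m : ℤ) (g : G) :
    liftMul k (toLex (m, g)) = toLex (m + wrap k g, k * g) := rfl

theorem commute_liftMul_lexShift (k : G) : Commute (liftMul k) lexShift := by
  ext x
  obtain ⟨⟨m, g⟩, rfl⟩ := toLex.surjective x
  simp only [RelIso.mul_apply, lexShift_apply, ofLex_toLex, liftMul_apply]
  congr 2; ring

theorem liftMul_one : liftMul (1 : G) = 1 := by
  ext x
  obtain ⟨⟨m, g⟩, rfl⟩ := toLex.surjective x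
  simp [liftMul_apply, wrap_one_left]

theorem liftMul_mul (g h : G) :
    liftMul g * liftMul h = lexShift ^ wrap g h * liftMul (g * h) := by
  refine ext_of_commute_lexShift isBot_one
    ((commute_liftMul_lexShift g).mul_left (commute_liftMul_lexShift h))
    (((Commute.refl _).zpow_left _).mul_left (commute_liftMul_lexShift _)) (fun x => ?_) ?_
  · obtain ⟨⟨m, a⟩, rfl⟩ := toLex.surjective x
    simp [liftMul_apply, lexShift_zpow_apply, mul_assoc]
  · simp [liftMul_apply, lexShift_zpow_apply, wrap_one_right]

theorem eq_one_of_liftMul_eq_zpow {k : G} {m : ℤ} (h : liftMul k = lexShift ^ m) : k = 1 := by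
  have := congrArg (fun φ : ℤ ×ₗ G ≃o ℤ ×ₗ G => (ofLex (φ (toLex (0, 1)))).2) h
  simpa [liftMul_apply, lexShift_zpow_apply] using this

noncomputable def liftHom : FreeGroup G →* (ℤ ×ₗ G ≃o ℤ ×ₗ G) := FreeGroup.lift liftMul

theorem exists_liftHom_eq (w : FreeGroup G) :
    ∃ m : ℤ, liftHom w = lexShift ^ m * liftMul (FreeGroup.lift id w) := by
  induction w using FreeGroup.induction_on with
  | C1 => exact ⟨0, by simp [liftMul_one]⟩
  | of x => exact ⟨0, by simp [liftHom]⟩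
  | inv_of x _ =>
    refine ⟨-wrap x⁻¹ x, ?_⟩
    have h := liftMul_mul x⁻¹ x
    rw [inv_mul_cancel, liftMul_one, mul_one] at h
    simp [liftHom, zpow_neg, ← h, mul_assoc]
  | mul u v hu hv =>
    obtain ⟨a, ha⟩ := hu
    obtain ⟨b, hb⟩ := hv
    refine ⟨a + b + wrap (FreeGroup.lift id u) (FreeGroup.lift id v), ?_⟩
    rw [map_mul, map_mul, ha, hb, zpow_add, zpow_add, mul_assoc, mul_assoc, mul_assoc,
      ← liftMul_mul, ← mul_assoc (liftMul _), ((commute_liftMul_lexShift _).zpow_right b).eq]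
    simp only [mul_assoc]

theorem commute_liftHom_lexShift (w : FreeGroup G) : Commute (liftHom w) lexShift := by
  obtain ⟨m, hm⟩ := exists_liftHom_eq w
  rw [hm]
  exact ((Commute.refl _).zpow_left m).mul_left (commute_liftMul_lexShift _)

theorem commute_liftHom_of_mem_presKernel {r : FreeGroup G} (hr : r ∈ presKernel G)
    (w : FreeGroup G) : Commute (liftHom r) (liftHom w) := by
  obtain ⟨m, hm⟩ := exists_liftHom_eq r
  rw [hm, (MonoidHom.mem_ker.mp hr), liftMul_one, mul_one]
  exact ((commute_liftHom_lexShift w).zpow_right m).symm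

theorem ker_liftHom_le_presKernel : (liftHom (G := G)).ker ≤ presKernel G := by
  intro w hw
  obtain ⟨m, hm⟩ := exists_liftHom_eq w
  rw [MonoidHom.mem_ker.mp hw, eq_comm, ← eq_inv_mul_iff_mul_eq, mul_one, ← zpow_neg] at hm
  exact MonoidHom.mem_ker.mpr (eq_one_of_liftMul_eq_zpow hm)

end IsCutCircularOrder

section Homology

variable {G : Type*} [Group G]

theorem eq_one_of_isOfFinOrder_of_addEquiv {A B : Type*} [Monoid A] [AddMonoid B]
    [IsAddTorsionFree B] (e : Additive A ≃+ B) {x : A} (hx : IsOfFinOrder x) : x = 1 := by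
  have : IsOfFinAddOrder (e (Additive.ofMul x)) :=
    e.toAddMonoidHom.isOfFinAddOrder (isOfFinAddOrder_ofMul_iff.mpr hx)
  simpa using this.eq_zero'

theorem mem_commutator_of_isOfFinOrder (hH1 : ∀ x : Abelianization G, IsOfFinOrder x → x = 1)
    {a : G} (ha : IsOfFinOrder a) : a ∈ commutator G := by
  rw [← Abelianization.ker_of, MonoidHom.mem_ker]
  exact hH1 _ (Abelianization.of.isOfFinOrder ha)

theorem exists_mem_commutator_lift_eq {a : G} (ha : a ∈ commutator G) :
    ∃ w ∈ commutator (FreeGroup G), FreeGroup.lift id w = a := by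
  have hsurj := FreeGroup.lift_surjective_of_surjective (surjective_id (α := G))
  rwa [commutator_def, ← Subgroup.map_top_of_surjective _ hsurj, ← Subgroup.map_commutator,
    Subgroup.mem_map, ← commutator_def] at ha

theorem exists_pow_mem_commutator_top_presKernel (hH2 : IsMulTorsion (H2 G)) {r : FreeGroup G}
    (hr : r ∈ presKernel G ⊓ commutator (FreeGroup G)) :
    ∃ n, 0 < n ∧ r ^ n ∈ ⁅(⊤ : Subgroup (FreeGroup G)), presKernel G⁆ := by
  obtain ⟨n, hn, hrn⟩ := isOfFinOrder_iff_pow_eq_one.mp (hH2 (QuotientGroup.mk ⟨r, hr⟩))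
  set K := presKernel G ⊓ commutator (FreeGroup G)
  have hrn' : (QuotientGroup.mk (⟨r, hr⟩ ^ n : K) :
      K ⧸ (⁅(⊤ : Subgroup (FreeGroup G)), presKernel G⁆).subgroupOf K) = 1 := hrn
  exact ⟨n, hn, Subgroup.mem_subgroupOf.mp ((QuotientGroup.eq_one_iff _).mp hrn')⟩

theorem commutator_top_presKernel_le_ker {E : Type*} [Group E] (ψ : FreeGroup G →* E)
    (hψ : ∀ r ∈ presKernel G, ∀ w, Commute (ψ r) (ψ w)) :
    ⁅(⊤ : Subgroup (FreeGroup G)), presKernel G⁆ ≤ ψ.ker := by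
  rw [Subgroup.commutator_le]
  intro w _ r hr
  rw [MonoidHom.mem_ker, map_commutatorElement, commutatorElement_eq_one_iff_commute]
  exact (hψ r hr w).symm

theorem IsOfFinOrder.eq_one_of_freeGroup_hom
    (hH1 : ∀ x : Abelianization G, IsOfFinOrder x → x = 1) (hH2 : IsMulTorsion (H2 G))
    {E : Type*} [Group E] (hE : ∀ e : E, IsOfFinOrder e → e = 1) (ψ : FreeGroup G →* E)
    (hψ : ∀ r ∈ presKernel G, ∀ w, Commute (ψ r) (ψ w)) (hker : ψ.ker ≤ presKernel G)
    {a : G} (ha : IsOfFinOrder a) : a = 1 := by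
  obtain ⟨n, hn, han⟩ := isOfFinOrder_iff_pow_eq_one.mp ha
  obtain ⟨w, hw, rfl⟩ := exists_mem_commutator_lift_eq (mem_commutator_of_isOfFinOrder hH1 ha)
  have hwn : w ^ n ∈ presKernel G ⊓ commutator (FreeGroup G) :=
    ⟨by simpa [presKernel] using han, pow_mem hw n⟩
  obtain ⟨m, hm, hwnm⟩ := exists_pow_mem_commutator_top_presKernel hH2 hwn
  have hψw : ψ w = 1 := by
    refine hE _ (isOfFinOrder_iff_pow_eq_one.mpr ⟨n * m, by positivity, ?_⟩)
    rw [← map_pow, pow_mul]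
    exact commutator_top_presKernel_le_ker ψ hψ hwnm
  exact hker hψw

end Homology

/-- A group with `H₁ ≅ ℤ`, finite `H₂` and a nontrivial torsion element
is not circularly orderable. (In particular, the universal central extension of a virtual
knot group with nontrivial finite second homology is not circularly orderable.) -/
theorem not_circularlyOrderable_of_torsion
    (Gt : Type u) [Group Gt]
    (hH1 : Nonempty (Additive (Abelianization Gt) ≃+ ℤ))
    (hH2 : Finite (H2 Gt))
    (htor : ∃ a : Gt, a ≠ 1 ∧ IsOfFinOrder a) :
    ¬ IsCircularlyOrderable Gt := by
  intro hGt
  obtain ⟨_, _⟩ := hGt.exists_isCutCircularOrder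
  obtain ⟨e⟩ := hH1
  obtain ⟨a, ha, hfin⟩ := htor
  exact ha <| hfin.eq_one_of_freeGroup_hom (fun _ => eq_one_of_isOfFinOrder_of_addEquiv e)
    isMulTorsion_of_finite (fun _ => OrderIso.eq_one_of_isOfFinOrder) IsCutCircularOrder.liftHom
    (fun _ => IsCutCircularOrder.commute_liftHom_of_mem_presKernel)
    IsCutCircularOrder.ker_liftHom_le_presKernel
end

section
/- Let n ≥ 1 and l ∈ ℤ, and let G be the group with presentation ⟨x, y | yⁿ = 1, x y x⁻¹ = y^l⟩. If G is circularly orderable, then G is abelian. -/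
universe u

/-- The relators of the group `⟨x, y | yⁿ = 1, x y x⁻¹ = y^l⟩`
(generators: `x = of 0`, `y = of 1`). -/
def metacyclicRels (n : ℕ) (l : ℤ) : Set (FreeGroup (Fin 2)) :=
  {FreeGroup.of 1 ^ n,
   FreeGroup.of 0 * FreeGroup.of 1 * (FreeGroup.of 0)⁻¹ * (FreeGroup.of 1 ^ l)⁻¹}


open scoped Classical

section CircCalc

variable {G : Type*} [Group G]

/-- winding sum of a path `P 0, P 1, ..., P m` around basepoint `b`. -/
def Nc (c : G → G → G → ℤ) (P : ℕ → G) (m : ℕ) (b : G) : ℤ :=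
  ∑ i ∈ Finset.range m, c (P i) b (P (i+1))

/-- crossing indicator: whether `b ∈ [u, v)`. -/
noncomputable def sc (c : G → G → G → ℤ) (b u v : G) : ℤ :=
  if b = u then 1 else if b = v then 0 else if c u b v = 1 then 1 else 0

/-- crossing count of a path around basepoint `b`. -/
noncomputable def Sc (c : G → G → G → ℤ) (P : ℕ → G) (m : ℕ) (b : G) : ℤ :=
  ∑ i ∈ Finset.range m, sc c b (P i) (P (i+1))

variable {c : G → G → G → ℤ}

section basic
set_option linter.unusedSectionVars false
variable (hzero : ∀ g₁ g₂ g₃ : G, c g₁ g₂ g₃ = 0 ↔ g₁ = g₂ ∨ g₁ = g₃ ∨ g₂ = g₃)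
variable (hcoc : ∀ g₁ g₂ g₃ g₄ : G, c g₂ g₃ g₄ - c g₁ g₃ g₄ + c g₁ g₂ g₄ - c g₁ g₂ g₃ = 0)
include hzero hcoc

lemma czero12 (a b : G) : c a a b = 0 := (hzero a a b).mpr (Or.inl rfl)
lemma czero13 (a b : G) : c a b a = 0 := (hzero a b a).mpr (Or.inr (Or.inl rfl))
lemma czero23 (a b : G) : c a b b = 0 := (hzero a b b).mpr (Or.inr (Or.inr rfl))

lemma cswap12 (u v w : G) : c v u w = - c u v w := by
  have h := hcoc u v u w
  have h1 := czero12 hzero hcoc u w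
  have h2 := czero13 hzero hcoc u v
  linarith

lemma ccyc (u v w : G) : c v w u = c u v w := by
  have h := hcoc u v w u
  have h1 := czero13 hzero hcoc u w
  have h2 := czero13 hzero hcoc u v
  linarith

lemma cswap23 (u v w : G) : c u w v = - c u v w := by
  have h1 := ccyc hzero hcoc u w v
  have h2 := cswap12 hzero hcoc w v u
  have h3 := ccyc hzero hcoc u v w
  linarith

lemma cswap13 (u v w : G) : c w v u = - c u v w := by
  have h1 := ccyc hzero hcoc w v u
  have h2 := cswap23 hzero hcoc v u w
  have h3 := cswap12 hzero hcoc u v w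
  linarith

/-- basepoint-change identity for one step. -/
lemma cb_step (u v b b' : G) : c u b v - c u b' v = c b' u b - c b' v b := by
  have h := hcoc b' u b v
  have h2 := cswap23 hzero hcoc b' v b
  have h3 := cswap12 hzero hcoc u b' v
  linarith

/-- basepoint change for winding sums of paths. -/
lemma Nc_base_change (P : ℕ → G) (m : ℕ) (b b' : G) :
    Nc c P m b - Nc c P m b' = c b' (P 0) b - c b' (P m) b := by
  calc Nc c P m b - Nc c P m b'
      = ∑ i ∈ Finset.range m, (c (P i) b (P (i+1)) - c (P i) b' (P (i+1))) := by
        rw [Nc, Nc, ← Finset.sum_sub_distrib]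
    _ = ∑ i ∈ Finset.range m, ((fun j => c b' (P j) b) i - (fun j => c b' (P j) b) (i+1)) := by
        refine Finset.sum_congr rfl fun i _ => ?_
        exact cb_step hzero hcoc _ _ _ _
    _ = c b' (P 0) b - c b' (P m) b := Finset.sum_range_sub' _ m

/-- basepoint independence for loops. -/
lemma Nc_loop (P : ℕ → G) (m : ℕ) (hloop : P m = P 0) (b b' : G) :
    Nc c P m b = Nc c P m b' := by
  have h := Nc_base_change hzero hcoc P m b b'
  rw [hloop] at h
  linarith

end basic

/-- translation invariance. -/
lemma Nc_translate (hinv : ∀ h g₁ g₂ g₃ : G, c g₁ g₂ g₃ = c (h * g₁) (h * g₂) (h * g₃))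
    (h : G) (P : ℕ → G) (m : ℕ) (b : G) :
    Nc c (fun i => h * P i) m b = Nc c P m (h⁻¹ * b) := by
  unfold Nc
  refine Finset.sum_congr rfl fun i _ => ?_
  have := hinv h (P i) (h⁻¹ * b) (P (i+1))
  rw [mul_inv_cancel_left] at this
  exact this.symm

end CircCalc

section Bridge

variable {G : Type*} [Group G] {c : G → G → G → ℤ}
set_option linter.unusedSectionVars false

variable (hval : ∀ g₁ g₂ g₃ : G, c g₁ g₂ g₃ = -1 ∨ c g₁ g₂ g₃ = 0 ∨ c g₁ g₂ g₃ = 1)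
variable (hzero : ∀ g₁ g₂ g₃ : G, c g₁ g₂ g₃ = 0 ↔ g₁ = g₂ ∨ g₁ = g₃ ∨ g₂ = g₃)
include hval hzero

lemma two_sc {u v : G} (huv : u ≠ v) (b : G) :
    2 * sc c b u v
      = c u b v + 1 + (if b = u then (1:ℤ) else 0) - (if b = v then (1:ℤ) else 0) := by
  unfold sc
  by_cases h1 : b = u
  · subst h1
    have hc : c b b v = 0 := (hzero b b v).mpr (Or.inl rfl)
    simp [huv, hc]
  · by_cases h2 : b = v
    · subst h2
      have hc : c u b b = 0 := (hzero u b b).mpr (Or.inr (Or.inr rfl))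
      simp [h1, hc]
    · have hc : c u b v ≠ 0 := fun h0 => by
        rcases (hzero u b v).mp h0 with h | h | h
        · exact h1 h.symm
        · exact huv h
        · exact h2 h
      rcases hval u b v with h | h | h
      · rw [h]; simp [h1, h2]
      · exact absurd h hc
      · rw [h]; simp [h1, h2]

lemma sc_nonneg (b u v : G) : 0 ≤ sc c b u v := by
  unfold sc; split_ifs <;> norm_num

lemma sc_le_one (b u v : G) : sc c b u v ≤ 1 := by
  unfold sc; split_ifs <;> norm_num

lemma sc_self_left (b v : G) : sc c b b v = 1 := by unfold sc; simp

lemma sc_third {b u : G} (h : b ≠ u) : sc c b u b = 0 := by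
  unfold sc; simp [h]

lemma bridge_chain (P : ℕ → G) (m : ℕ) (b : G) (hstep : ∀ i < m, P i ≠ P (i+1)) :
    2 * Sc c P m b = Nc c P m b + m
      + (if b = P 0 then 1 else 0) - (if b = P m then 1 else 0) := by
  have key : ∀ i ∈ Finset.range m,
      2 * sc c b (P i) (P (i+1))
        = (c (P i) b (P (i+1)) + 1)
          + ((fun j => if b = P j then (1:ℤ) else 0) i
             - (fun j => if b = P j then (1:ℤ) else 0) (i+1)) := by
    intro i hi
    have := two_sc hval hzero (hstep i (Finset.mem_range.mp hi)) b
    simp only at this ⊢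
    linarith
  calc 2 * Sc c P m b = ∑ i ∈ Finset.range m, 2 * sc c b (P i) (P (i+1)) := by
        rw [Sc, Finset.mul_sum]
    _ = ∑ i ∈ Finset.range m, ((c (P i) b (P (i+1)) + 1)
          + ((fun j => if b = P j then (1:ℤ) else 0) i
             - (fun j => if b = P j then (1:ℤ) else 0) (i+1))) := Finset.sum_congr rfl key
    _ = Nc c P m b + m + ((if b = P 0 then 1 else 0) - (if b = P m then 1 else 0)) := by
        rw [Finset.sum_add_distrib, Finset.sum_add_distrib, Finset.sum_range_sub']
        simp [Nc]
    _ = _ := by ring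

lemma bridge_loop (P : ℕ → G) (m : ℕ) (b : G) (hstep : ∀ i < m, P i ≠ P (i+1))
    (hloop : P m = P 0) :
    2 * Sc c P m b = Nc c P m b + m := by
  have := bridge_chain hval hzero P m b hstep
  rw [hloop] at this
  simp at this
  linarith

lemma Sc_nonneg (P : ℕ → G) (m : ℕ) (b : G) : 0 ≤ Sc c P m b :=
  Finset.sum_nonneg fun i _ => sc_nonneg hval hzero _ _ _

end Bridge

section Orbits

variable {G : Type*} [Group G] {c : G → G → G → ℤ}
set_option linter.unusedSectionVars false

/-- the orbit path of `a` under left multiplication by `u`. -/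
def orb (u a : G) : ℕ → G := fun i => u ^ i * a

/-- the closed-up power path `a, u a, ..., u^l a, a`. -/
noncomputable def qpath (u a : G) (l : ℕ) : ℕ → G := fun i => if i ≤ l then u ^ i * a else a

/-- a triangle loop. -/
def tri3 (p q r : G) : ℕ → G := fun i =>
  if i = 0 then p else if i = 1 then q else if i = 2 then r else p

lemma orb_step_ne {u : G} (hu : u ≠ 1) (a : G) (i : ℕ) : orb u a i ≠ orb u a (i+1) := by
  unfold orb
  intro h
  rw [pow_succ] at h
  exact hu (by
    have h2 : u ^ i = u ^ i * u := mul_right_cancel h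
    have := (mul_left_cancel (a := u ^ i) (by rw [← h2, mul_one]) : (1:G) = u)
    exact this.symm)

lemma orb_loop {u : G} {k : ℕ} (hu : u ^ k = 1) (a : G) : orb u a k = orb u a 0 := by
  unfold orb; rw [hu, pow_zero]

lemma tri3_loop (p q r : G) : tri3 p q r 3 = tri3 p q r 0 := rfl

lemma Nc_tri3 (p q r b : G) :
    Nc c (tri3 p q r) 3 b = c p b q + c q b r + c r b p := by
  unfold Nc
  rw [Finset.sum_range_succ, Finset.sum_range_succ, Finset.sum_range_succ,
    Finset.sum_range_zero]
  norm_num [tri3]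

lemma tri3_translate (h p q r : G) :
    (fun i => h * tri3 p q r i) = tri3 (h*p) (h*q) (h*r) := by
  funext i
  unfold tri3
  split_ifs <;> rfl

lemma sum_range_mul_decomp (f : ℕ → ℤ) (k l : ℕ) :
    ∑ i ∈ Finset.range (k*l), f i = ∑ q ∈ Finset.range k, ∑ j ∈ Finset.range l, f (q*l + j) := by
  induction k with
  | zero => simp
  | succ k ih =>
      rw [Nat.succ_mul, Finset.sum_range_add, ih, Finset.sum_range_succ]

lemma sum_periodic (f : ℕ → ℤ) (k : ℕ) (hf : ∀ i, f (i+k) = f i) (l : ℕ) :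
    ∑ i ∈ Finset.range (l*k), f i = l * ∑ i ∈ Finset.range k, f i := by
  induction l with
  | zero => simp
  | succ l ih =>
      have haux : ∀ (q : ℕ) (j : ℕ), f (q*k + j) = f j := by
        intro q
        induction q with
        | zero => intro j; simp
        | succ q ih2 =>
            intro j
            have h3 : (q+1)*k + j = (q*k + j) + k := by ring
            rw [h3, hf, ih2]
      rw [Nat.succ_mul, Finset.sum_range_add, ih]
      have h4 : ∑ j ∈ Finset.range k, f (l*k + j) = ∑ j ∈ Finset.range k, f j :=
        Finset.sum_congr rfl fun j _ => haux l j
      rw [h4]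
      push_cast
      ring

end Orbits

section MainIdentities

variable {G : Type*} [Group G] {c : G → G → G → ℤ}
set_option linter.unusedSectionVars false
set_option maxHeartbeats 1000000

variable (hzero : ∀ g₁ g₂ g₃ : G, c g₁ g₂ g₃ = 0 ↔ g₁ = g₂ ∨ g₁ = g₃ ∨ g₂ = g₃)
variable (hcoc : ∀ g₁ g₂ g₃ g₄ : G, c g₂ g₃ g₄ - c g₁ g₃ g₄ + c g₁ g₂ g₄ - c g₁ g₂ g₃ = 0)
variable (hinv : ∀ h g₁ g₂ g₃ : G, c g₁ g₂ g₃ = c (h * g₁) (h * g₂) (h * g₃))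
include hzero hcoc hinv

omit hzero hcoc hinv in
lemma qpath_Nc (u a : G) (l : ℕ) (b : G) :
    Nc c (qpath u a l) (l+1) b = Nc c (orb u a) l b + c (u^l * a) b a := by
  unfold Nc
  rw [Finset.sum_range_succ]
  congr 1
  · refine Finset.sum_congr rfl fun i hi => ?_
    have hi' := Finset.mem_range.mp hi
    have h1 : qpath u a l i = u ^ i * a := by unfold qpath; rw [if_pos (by omega)]
    have h2 : qpath u a l (i+1) = u ^ (i+1) * a := by unfold qpath; rw [if_pos (by omega)]
    rw [h1, h2]; rfl
  · have h1 : qpath u a l l = u ^ l * a := by unfold qpath; rw [if_pos (le_refl l)]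
    have h2 : qpath u a l (l+1) = a := by unfold qpath; rw [if_neg (by omega)]
    rw [h1, h2]

omit hzero hcoc hinv in
lemma qpath_loop (u a : G) (l : ℕ) : qpath u a l (l+1) = qpath u a l 0 := by
  unfold qpath
  rw [if_neg (by omega), if_pos (by omega), pow_zero, one_mul]

/-- The power identity: `l · rot(u) = rot(u^l) + k · (correction)`. -/
lemma Nc_power (u a : G) (k : ℕ) (hu : u ^ k = 1) (l : ℕ) (b : G) :
    (l:ℤ) * Nc c (orb u a) k b
      = k * (Nc c (orb u a) l b + c (u^l * a) b a) + Nc c (orb (u^l) a) k b := by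
  set f : ℕ → ℤ := fun i => c (u^i * a) b (u^(i+1) * a) with hf
  have hp : ∀ j : ℕ, u^(j+k) = u^j := fun j => by rw [pow_add, hu, mul_one]
  have hper : ∀ i, f (i+k) = f i := by
    intro i
    have h1 : i+k+1 = (i+1)+k := by ring
    simp only [hf, h1, hp]
  have hNk : Nc c (orb u a) k b = ∑ i ∈ Finset.range k, f i := rfl
  have hB : ∑ i ∈ Finset.range (k*l), f i = (l:ℤ) * Nc c (orb u a) k b := by
    rw [mul_comm k l, sum_periodic f k hper l, hNk]
  have hinner : ∀ q, ∑ j ∈ Finset.range l, f (q*l + j)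
      = Nc c (orb u a) l ((u^(q*l))⁻¹ * b) := by
    intro q
    have ht := Nc_translate hinv (u^(q*l)) (orb u a) l b
    rw [← ht]
    unfold Nc
    refine Finset.sum_congr rfl fun j _ => ?_
    show c (u^(q*l+j) * a) b (u^(q*l+j+1) * a)
        = c (u^(q*l) * (u^j * a)) b (u^(q*l) * (u^(j+1) * a))
    have e1 : u^(q*l) * (u^j * a) = u^(q*l+j) * a := by rw [← mul_assoc, ← pow_add]
    have e2 : u^(q*l) * (u^(j+1) * a) = u^(q*l+j+1) * a := by
      rw [← mul_assoc, ← pow_add, Nat.add_assoc]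
    rw [e1, e2]
  have hWq : ∀ q : ℕ, Nc c (orb u a) l ((u^(q*l))⁻¹ * b)
      = Nc c (orb u a) l b + c (u^l*a) b a - c (u^l * a) ((u^(q*l))⁻¹ * b) a := by
    intro q
    have h1 : Nc c (qpath u a l) (l+1) ((u^(q*l))⁻¹ * b) = Nc c (qpath u a l) (l+1) b :=
      Nc_loop hzero hcoc _ _ (qpath_loop u a l) _ _
    rw [qpath_Nc, qpath_Nc] at h1
    linarith
  have hct : ∀ q : ℕ, c (u^l * a) ((u^(q*l))⁻¹ * b) a
      = - c ((u^l)^q * a) b ((u^l)^(q+1) * a) := by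
    intro q
    have h1 := hinv (u^(q*l)) (u^l * a) ((u^(q*l))⁻¹ * b) a
    rw [mul_inv_cancel_left] at h1
    have e1 : u^(q*l) * (u^l * a) = (u^l)^(q+1) * a := by
      rw [← mul_assoc, ← pow_add, ← pow_mul, mul_comm l (q+1)]
      congr 2
      ring
    have e2 : u^(q*l) * a = (u^l)^q * a := by rw [← pow_mul, mul_comm l q]
    rw [e1, e2] at h1
    rw [h1]
    exact cswap13 hzero hcoc _ _ _
  have hsum : ∑ i ∈ Finset.range (k*l), f i
      = (k:ℤ) * (Nc c (orb u a) l b + c (u^l*a) b a) + Nc c (orb (u^l) a) k b := by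
    rw [sum_range_mul_decomp f k l]
    have : ∀ q ∈ Finset.range k, ∑ j ∈ Finset.range l, f (q*l + j)
        = (Nc c (orb u a) l b + c (u^l*a) b a) + c ((u^l)^q * a) b ((u^l)^(q+1) * a) := by
      intro q _
      rw [hinner q, hWq q, hct q]
      ring
    rw [Finset.sum_congr rfl this, Finset.sum_add_distrib]
    simp only [Finset.sum_const, Finset.card_range, nsmul_eq_mul]
    rfl
  rw [← hB, hsum]

/-- Basepoint (in the orbit sense) independence up to multiples of `k`. -/
lemma Nc_base_a (u : G) (k : ℕ) (hu : u ^ k = 1) (a a' b : G) :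
    Nc c (orb u a) k b + (k:ℤ) * Nc c (tri3 a a' (u*a)) 3 b
      = Nc c (orb u a') k b + (k:ℤ) * Nc c (tri3 a' (u*a) (u*a')) 3 b := by
  set A : ℕ → ℤ := fun i => c (u^i*a) b (u^i*a') with hA
  set B : ℕ → ℤ := fun i => c (u^i*a') b (u^(i+1)*a) with hB
  set T := Nc c (tri3 a a' (u*a)) 3 b with hT
  set T' := Nc c (tri3 a' (u*a) (u*a')) 3 b with hT'
  have e1 : ∀ i : ℕ, u^i * (u * a) = u^(i+1) * a := fun i => by
    rw [← mul_assoc, ← pow_succ]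
  have e1' : ∀ i : ℕ, u^i * (u * a') = u^(i+1) * a' := fun i => by
    rw [← mul_assoc, ← pow_succ]
  have step1 : ∀ i : ℕ, A i + B i = T + c (u^i*a) b (u^(i+1)*a) := by
    intro i
    have htr : Nc c (tri3 (u^i*a) (u^i*a') (u^(i+1)*a)) 3 b = T := by
      have e : tri3 (u^i*a) (u^i*a') (u^(i+1)*a) = fun j => u^i * tri3 a a' (u*a) j := by
        rw [tri3_translate, e1]
      rw [e, Nc_translate hinv, Nc_loop hzero hcoc _ 3 (tri3_loop _ _ _) _ b]
    rw [Nc_tri3] at htr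
    have hs := cswap13 hzero hcoc (u^i*a) b (u^(i+1)*a)
    simp only [hA, hB]
    linarith
  have step2 : ∀ i : ℕ, B i + A (i+1) = T' + c (u^i*a') b (u^(i+1)*a') := by
    intro i
    have htr : Nc c (tri3 (u^i*a') (u^(i+1)*a) (u^(i+1)*a')) 3 b = T' := by
      have e : tri3 (u^i*a') (u^(i+1)*a) (u^(i+1)*a') = fun j => u^i * tri3 a' (u*a) (u*a') j := by
        rw [tri3_translate, e1, e1']
      rw [e, Nc_translate hinv, Nc_loop hzero hcoc _ 3 (tri3_loop _ _ _) _ b]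
    rw [Nc_tri3] at htr
    have hs := cswap13 hzero hcoc (u^i*a') b (u^(i+1)*a')
    simp only [hA, hB]
    linarith
  have sum1 : ∑ i ∈ Finset.range k, A i + ∑ i ∈ Finset.range k, B i
      = (k:ℤ) * T + Nc c (orb u a) k b := by
    rw [← Finset.sum_add_distrib]
    rw [Finset.sum_congr rfl fun i _ => step1 i, Finset.sum_add_distrib]
    simp only [Finset.sum_const, Finset.card_range, nsmul_eq_mul]
    rfl
  have sum2 : ∑ i ∈ Finset.range k, B i + ∑ i ∈ Finset.range k, A (i+1)
      = (k:ℤ) * T' + Nc c (orb u a') k b := by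
    rw [← Finset.sum_add_distrib]
    rw [Finset.sum_congr rfl fun i _ => step2 i, Finset.sum_add_distrib]
    simp only [Finset.sum_const, Finset.card_range, nsmul_eq_mul]
    rfl
  have hshift : ∑ i ∈ Finset.range k, A (i+1) = ∑ i ∈ Finset.range k, A i := by
    have hA0 : A k = A 0 := by simp only [hA, hu, pow_zero]
    have h1 := Finset.sum_range_succ' A k
    have h2 := Finset.sum_range_succ A k
    rw [h1] at h2
    linarith
  rw [hshift] at sum2
  linarith

end MainIdentities

section Core

variable {G : Type*} [Group G] {c : G → G → G → ℤ}
set_option linter.unusedSectionVars false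
set_option maxHeartbeats 1000000

lemma tri3_steps {p q r : G} (h1 : p ≠ q) (h2 : q ≠ r) (h3 : r ≠ p) :
    ∀ i < 3, tri3 p q r i ≠ tri3 p q r (i+1) := by
  intro i hi
  interval_cases i <;> simpa [tri3]

lemma conj_pow_nat (x y : G) : ∀ i : ℕ, (x*y*x⁻¹)^i = x*y^i*x⁻¹ := by
  intro i
  induction i with
  | zero => simp
  | succ i ih => rw [pow_succ, pow_succ, ih]; group

variable (hval : ∀ g₁ g₂ g₃ : G, c g₁ g₂ g₃ = -1 ∨ c g₁ g₂ g₃ = 0 ∨ c g₁ g₂ g₃ = 1)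
variable (hzero : ∀ g₁ g₂ g₃ : G, c g₁ g₂ g₃ = 0 ↔ g₁ = g₂ ∨ g₁ = g₃ ∨ g₂ = g₃)
variable (hcoc : ∀ g₁ g₂ g₃ g₄ : G, c g₂ g₃ g₄ - c g₁ g₃ g₄ + c g₁ g₂ g₄ - c g₁ g₂ g₃ = 0)
variable (hinv : ∀ h g₁ g₂ g₃ : G, c g₁ g₂ g₃ = c (h * g₁) (h * g₂) (h * g₃))
include hval hzero hcoc hinv

theorem core_rotation (x y : G) (k l' : ℕ)
    (hk : orderOf y = k) (hk2 : 2 ≤ k) (hl1 : 1 ≤ l') (hlk : l' < k)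
    (hconj : x * y * x⁻¹ = y ^ l') (hxy : ∀ m : ℕ, x ≠ y ^ m) : l' = 1 := by
  by_contra hne
  have hl2 : 2 ≤ l' := by omega
  have hyk : y ^ k = 1 := by rw [← hk]; exact pow_orderOf_eq_one y
  have hy1 : y ≠ 1 := by
    intro h; rw [h, orderOf_one] at hk; omega
  have hypow_ne : ∀ j : ℕ, 1 ≤ j → j < k → y ^ j ≠ 1 := by
    intro j hj1 hjk h
    have hd := orderOf_dvd_of_pow_eq_one h
    rw [hk] at hd
    have := Nat.le_of_dvd (by omega) hd
    omega
  have hyl1 : y ^ l' ≠ 1 := hypow_ne l' hl1 hlk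
  have hpowk : ∀ j : ℕ, (y ^ j) ^ k = 1 := fun j => by
    rw [← pow_mul, mul_comm, pow_mul, hyk, one_pow]
  -- bridges for k-loops
  have bridgeO : ∀ (u a : G), u ≠ 1 → u ^ k = 1 →
      2 * Sc c (orb u a) k 1 = Nc c (orb u a) k 1 + k :=
    fun u a hu1 huk =>
      bridge_loop hval hzero (orb u a) k 1 (fun i _ => orb_step_ne hu1 a i) (orb_loop huk a)
  set p := Sc c (orb y 1) k 1 with hp
  have hbp := bridgeO y 1 hy1 hyk
  -- power identity, bridged
  have hqsteps : ∀ (l : ℕ), 1 ≤ l → l < k → ∀ i < l + 1,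
      qpath y 1 l i ≠ qpath y 1 l (i+1) := by
    intro l hl1' hlk' i hi
    by_cases hil : i < l
    · have h1 : qpath y 1 l i = y ^ i * 1 := by unfold qpath; rw [if_pos (by omega)]
      have h2 : qpath y 1 l (i+1) = y ^ (i+1) * 1 := by unfold qpath; rw [if_pos (by omega)]
      rw [h1, h2]
      exact orb_step_ne hy1 1 i
    · have hi' : i = l := by omega
      subst hi'
      have h1 : qpath y 1 i i = y ^ i * 1 := by unfold qpath; rw [if_pos (le_refl i)]
      have h2 : qpath y 1 i (i+1) = 1 := by unfold qpath; rw [if_neg (by omega)]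
      rw [h1, h2, mul_one]
      exact hypow_ne i hl1' hlk'
  have power_step : ∀ (l : ℕ), 1 ≤ l → l < k →
      (l:ℤ) * p = k * (Sc c (qpath y 1 l) (l+1) 1 - 1) + Sc c (orb (y^l) 1) k 1 := by
    intro l hl1' hlk'
    have hpow := Nc_power hzero hcoc hinv y 1 k hyk l 1
    have hbq := bridge_loop hval hzero (qpath y 1 l) (l+1) 1
      (hqsteps l hl1' hlk') (qpath_loop y 1 l)
    have hql := qpath_Nc (c := c) (u := y) (a := 1) (l := l) (b := 1)
    have hbl := bridgeO (y^l) 1 (hypow_ne l hl1' hlk') (hpowk l)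
    have e1 : Nc c (orb y 1) k 1 = 2 * p - k := by linarith
    have e2 : Nc c (orb y 1) l 1 + c (y^l * 1) 1 1
        = 2 * Sc c (qpath y 1 l) (l+1) 1 - (l+1) := by
      push_cast at hbq
      push_cast
      linarith
    have e3 : Nc c (orb (y^l) 1) k 1 = 2 * Sc c (orb (y^l) 1) k 1 - k := by linarith
    rw [e1, e2, e3] at hpow
    ring_nf at hpow ⊢
    linarith
  have h1 := power_step l' hl1 hlk
  -- basepoint independence for y^l'
  set Pl := Sc c (orb (y^l') 1) k 1 with hPl
  set Pl' := Sc c (orb (y^l') x) k 1 with hPl'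
  have hbPl := bridgeO (y^l') 1 hyl1 (hpowk l')
  have hbPl' := bridgeO (y^l') x hyl1 (hpowk l')
  have hbase := Nc_base_a hzero hcoc hinv (y^l') k (hpowk l') 1 x 1
  set T := Nc c (tri3 1 x (y^l'*1)) 3 1 with hT
  set T' := Nc c (tri3 x (y^l'*1) (y^l'*x)) 3 1 with hT'
  have hx1 : (1:G) ≠ x := fun h => hxy 0 (by rw [pow_zero]; exact h.symm)
  have hxl : x ≠ y^l' * 1 := by rw [mul_one]; exact hxy l'
  have hl1' : y^l' * 1 ≠ 1 := by rw [mul_one]; exact hyl1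
  have hTsteps := tri3_steps hx1 hxl hl1'
  have hT'steps : ∀ i < 3, tri3 x (y^l'*1) (y^l'*x) i ≠ tri3 x (y^l'*1) (y^l'*x) (i+1) := by
    refine tri3_steps hxl ?_ ?_
    · intro h
      exact hx1 (mul_left_cancel h)
    · intro h
      have : y^l' = 1 := by
        have h2 : y^l' * x = 1 * x := by rw [h, one_mul]
        exact mul_right_cancel h2
      exact hyl1 this
  have hbT := bridge_loop hval hzero (tri3 1 x (y^l'*1)) 3 1 hTsteps (tri3_loop _ _ _)
  have hbT' := bridge_loop hval hzero (tri3 x (y^l'*1) (y^l'*x)) 3 1 hT'steps (tri3_loop _ _ _)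
  set ST := Sc c (tri3 1 x (y^l'*1)) 3 1 with hST
  set ST' := Sc c (tri3 x (y^l'*1) (y^l'*x)) 3 1 with hST'
  have hbase2 : Pl + (k:ℤ) * ST = Pl' + (k:ℤ) * ST' := by
    have m1 : (k:ℤ) * T = k * (2*ST - 3) := by
      have : T = 2*ST - 3 := by push_cast at hbT; linarith
      rw [this]
    have m2 : (k:ℤ) * T' = k * (2*ST' - 3) := by
      have : T' = 2*ST' - 3 := by push_cast at hbT'; linarith
      rw [this]
    have hNl : Nc c (orb (y^l') 1) k 1 = 2 * Pl - k := by linarith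
    have hNl' : Nc c (orb (y^l') x) k 1 = 2 * Pl' - k := by linarith
    rw [hNl, hNl'] at hbase
    ring_nf at m1 m2 hbase ⊢
    linarith
  -- conjugation
  have horb : orb (y^l') x = fun i => x * orb y 1 i := by
    funext i
    show (y^l')^i * x = x * (y^i * 1)
    rw [← hconj, conj_pow_nat, mul_one]
    group
  have hconjN : Nc c (orb (y^l') x) k 1 = Nc c (orb y 1) k 1 := by
    rw [horb, Nc_translate hinv]
    exact Nc_loop hzero hcoc _ k (orb_loop hyk 1) _ 1
  have hPl'p : Pl' = p := by linarith
  -- combine: k ∣ (l'-1) * p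
  have hdvd : (k:ℤ) ∣ ((l':ℤ) - 1) * p := by
    refine ⟨Sc c (qpath y 1 l') (l'+1) 1 - 1 + (ST' - ST), ?_⟩
    ring_nf
    ring_nf at h1 hbase2
    linarith
  -- gcd step
  set g := Nat.gcd k (l'-1) with hg
  have hgpos : 0 < g := Nat.gcd_pos_of_pos_right _ (by omega)
  have hgk : g ∣ k := Nat.gcd_dvd_left _ _
  have hgl : g ∣ (l'-1) := Nat.gcd_dvd_right _ _
  have hgle : g ≤ l'-1 := Nat.le_of_dvd (by omega) hgl
  set e := k / g with he
  have hek : g * e = k := Nat.mul_div_cancel' hgk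
  have he2 : 2 ≤ e := by
    rcases Nat.lt_or_ge e 2 with h | h
    · interval_cases e
      · omega
      · omega
    · exact h
  set m := (l'-1) / g with hm
  have hgm : g * m = l'-1 := Nat.mul_div_cancel' hgl
  have hcop : Nat.Coprime e m := Nat.coprime_div_gcd_div_gcd hgpos
  have hepdvd : (e:ℤ) ∣ p := by
    have hmp : (e:ℤ) ∣ (m:ℤ) * p := by
      rcases hdvd with ⟨t, ht⟩
      refine ⟨t, ?_⟩
      have hcast : ((l':ℤ) - 1) = ((g:ℕ):ℤ) * m := by
        have : ((l' - 1 : ℕ) : ℤ) = (l':ℤ) - 1 := by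
          push_cast [Nat.cast_sub hl1]
          ring
        rw [← this, ← hgm]
        push_cast
        ring
      have hkcast : (k:ℤ) = (g:ℤ) * e := by rw [← hek]; push_cast; ring
      rw [hcast, hkcast] at ht
      have hg0 : (g:ℤ) ≠ 0 := by exact_mod_cast Nat.pos_iff_ne_zero.mp hgpos
      apply mul_left_cancel₀ hg0
      ring_nf
      ring_nf at ht
      linarith
    exact (Nat.isCoprime_iff_coprime.mpr hcop).dvd_of_dvd_mul_left hmp
  -- now the subgroup element v = y^g
  have hglt : g < k := by omega
  have hg1 : 1 ≤ g := hgpos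
  have hv1 : y^g ≠ 1 := hypow_ne g hg1 hglt
  have h2 := power_step g hg1 hglt
  set v := y^g with hv
  have hve : v^e = 1 := by rw [hv, ← pow_mul, hek, hyk]
  -- concatenation
  have hconcat : Nc c (orb v 1) k 1 = (g:ℤ) * Nc c (orb v 1) e 1 := by
    have hpv : ∀ j : ℕ, v^(j+e) = v^j := fun j => by rw [pow_add, hve, mul_one]
    have hper : ∀ i, (fun i => c (v^i*1) 1 (v^(i+1)*1)) (i+e)
        = (fun i => c (v^i*1) 1 (v^(i+1)*1)) i := by
      intro i
      have h1 : i+e+1 = (i+1)+e := by ring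
      simp only [h1, hpv]
    have := sum_periodic (fun i => c (v^i*1) 1 (v^(i+1)*1)) e hper g
    show Nc c (orb v 1) k 1 = (g:ℤ) * Nc c (orb v 1) e 1
    have hrw : Nc c (orb v 1) k 1 = ∑ i ∈ Finset.range (g*e), (fun i => c (v^i*1) 1 (v^(i+1)*1)) i := by
      rw [hek]; rfl
    rw [hrw, this]
    rfl
  set Pv := Sc c (orb v 1) k 1 with hPv
  set Pe := Sc c (orb v 1) e 1 with hPe
  have hbv := bridgeO v 1 hv1 (by rw [hv]; exact hpowk g)
  have hbe := bridge_loop hval hzero (orb v 1) e 1 (fun i _ => orb_step_ne hv1 1 i)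
    (orb_loop hve 1)
  have hPvPe : Pv = (g:ℤ) * Pe := by
    have mNe : (g:ℤ) * Nc c (orb v 1) e 1 = g * (2 * Pe - e) := by
      have : Nc c (orb v 1) e 1 = 2 * Pe - e := by push_cast at hbe; linarith
      rw [this]
    have hkcast : (k:ℤ) = (g:ℤ) * e := by rw [← hek]; push_cast; ring
    rw [hconcat] at hbv
    rw [mNe, hkcast] at hbv
    ring_nf at hbv ⊢
    linarith
  -- cancel g
  have hpPee : p - Pe = (e:ℤ) * (Sc c (qpath y 1 g) (g+1) 1 - 1) := by
    have hkcast : (k:ℤ) = (g:ℤ) * e := by rw [← hek]; push_cast; ring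
    rw [hPvPe, hkcast] at h2
    have hg0 : (g:ℤ) ≠ 0 := by exact_mod_cast Nat.pos_iff_ne_zero.mp hgpos
    apply mul_left_cancel₀ hg0
    ring_nf
    ring_nf at h2
    linarith
  have hePedvd : (e:ℤ) ∣ Pe := by
    have : (e:ℤ) ∣ p - Pe := ⟨_, hpPee⟩
    have h3 := dvd_sub hepdvd this
    simpa using h3
  -- bounds on Pe
  have hPe1 : 1 ≤ Pe := by
    have h0 : sc c 1 (orb v 1 0) (orb v 1 1) = 1 := by
      show sc c 1 (v^0*1) (v^1*1) = 1
      rw [pow_zero, one_mul]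
      exact sc_self_left hval hzero 1 _
    calc (1:ℤ) = sc c 1 (orb v 1 0) (orb v 1 (0+1)) := by rw [h0]
      _ ≤ Pe := Finset.single_le_sum (fun i _ => sc_nonneg hval hzero _ _ _)
          (Finset.mem_range.mpr (by omega))
  have hPele : Pe ≤ (e:ℤ) - 1 := by
    obtain ⟨e', he'⟩ : ∃ e', e = e' + 1 := ⟨e - 1, by omega⟩
    have hlast : sc c 1 (orb v 1 e') (orb v 1 (e'+1)) = 0 := by
      have hve' : orb v 1 (e'+1) = 1 := by
        show v^(e'+1) * 1 = 1
        rw [← he', hve, one_mul]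
      have hne' : (1:G) ≠ orb v 1 e' := by
        show (1:G) ≠ v^e' * 1
        rw [mul_one]
        intro hh
        apply hv1
        have : v^(e'+1) = v := by rw [pow_succ, ← hh, one_mul]
        rw [← he'] at this
        rw [← this, hve]
      rw [hve']
      exact sc_third hval hzero hne'
    have hsum : Pe = (∑ i ∈ Finset.range e', sc c 1 (orb v 1 i) (orb v 1 (i+1)))
        + sc c 1 (orb v 1 e') (orb v 1 (e'+1)) := by
      rw [hPe, Sc, he', Finset.sum_range_succ]
    have hbound : (∑ i ∈ Finset.range e', sc c 1 (orb v 1 i) (orb v 1 (i+1))) ≤ (e':ℤ) := by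
      calc (∑ i ∈ Finset.range e', sc c 1 (orb v 1 i) (orb v 1 (i+1)))
          ≤ ∑ _i ∈ Finset.range e', (1:ℤ) :=
            Finset.sum_le_sum (fun i _ => sc_le_one hval hzero _ _ _)
        _ = (e':ℤ) := by simp
    rw [hsum, hlast]
    push_cast [he']
    linarith
  have := Int.le_of_dvd (by omega) hePedvd
  omega

end Core

/-- If the group `⟨x, y | yⁿ = 1, x y x⁻¹ = y^l⟩` (`n ≥ 1`) is
circularly orderable, then it is abelian. -/
theorem metacyclic_abelian_of_circularlyOrderable (n : ℕ) (hn : 1 ≤ n) (l : ℤ)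
    (hco : IsCircularlyOrderable (PresentedGroup (metacyclicRels n l))) :
    ∀ a b : PresentedGroup (metacyclicRels n l), a * b = b * a := by
  obtain ⟨c, hval, hzero, hcoc, hinv⟩ := hco
  set PG := PresentedGroup (metacyclicRels n l) with hPG
  set x : PG := PresentedGroup.of 0 with hx
  set y : PG := PresentedGroup.of 1 with hy
  -- the relations hold in PG
  have hrel : ∀ r ∈ metacyclicRels n l, (PresentedGroup.mk (metacyclicRels n l) r) = 1 :=
    fun r hr => (QuotientGroup.eq_one_iff r).mpr (Subgroup.subset_normalClosure hr)
  have hr1 : y ^ n = 1 := by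
    have h := hrel _ (show (FreeGroup.of 1 ^ n : FreeGroup (Fin 2)) ∈ metacyclicRels n l from
      Set.mem_insert _ _)
    rw [map_pow] at h
    exact h
  have hr2 : x * y * x⁻¹ = y ^ (l:ℤ) := by
    have h := hrel _ (show (FreeGroup.of 0 * FreeGroup.of 1 * (FreeGroup.of 0)⁻¹
        * (FreeGroup.of 1 ^ l)⁻¹ : FreeGroup (Fin 2)) ∈ metacyclicRels n l from
      Set.mem_insert_of_mem _ rfl)
    rw [map_mul, map_mul, map_mul, map_inv, map_inv, map_zpow] at h
    exact mul_inv_eq_one.mp h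
  -- the homomorphism to ℤ detecting x
  have hf : ∀ r ∈ metacyclicRels n l,
      FreeGroup.lift (![Multiplicative.ofAdd (1:ℤ), 1] : Fin 2 → Multiplicative ℤ) r = 1 := by
    intro r hr
    rcases hr with hr | hr
    · rw [hr, map_pow]
      simp
    · rw [Set.mem_singleton_iff] at hr
      rw [hr]
      rw [map_mul, map_mul, map_mul, map_inv, map_inv, map_zpow]
      simp
  have hxy : ∀ m : ℕ, x ≠ y ^ m := by
    intro m h
    have h2 := congrArg (PresentedGroup.toGroup hf) h
    rw [map_pow] at h2
    rw [hx, hy] at h2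
    rw [PresentedGroup.toGroup.of, PresentedGroup.toGroup.of] at h2
    simp only [Matrix.cons_val_zero, Matrix.cons_val_one, Matrix.head_cons, one_pow] at h2
    have h3 : Multiplicative.ofAdd (1:ℤ) = 1 := by simpa using h2
    have h4 : (1:ℤ) = 0 := by simpa using congrArg Multiplicative.toAdd h3
    exact one_ne_zero h4
  -- order considerations
  set k := orderOf y with hk
  have hkdvd : k ∣ n := orderOf_dvd_of_pow_eq_one hr1
  have hk1 : 1 ≤ k := by
    rcases Nat.eq_zero_or_pos k with h | h
    · rw [h] at hkdvd
      omega
    · omega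
  -- main commuting fact
  have hcomm : x * y = y * x := by
    rcases Nat.lt_or_ge k 2 with hk2 | hk2
    · -- k = 1, so y = 1
      have : k = 1 := by omega
      have hy1 : y = 1 := orderOf_eq_one_iff.mp (hk ▸ this)
      rw [hy1, mul_one, one_mul]
    · -- k ≥ 2 : use the rotation number machinery
      have hk0 : (0:ℤ) < (k:ℤ) := by exact_mod_cast hk1
      set l' : ℕ := (l % (k:ℤ)).toNat with hl'
      have hmodnn : 0 ≤ l % (k:ℤ) := Int.emod_nonneg l (by omega)
      have hmod : y ^ (l:ℤ) = y ^ (l' : ℕ) := by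
        have h1 : y ^ (l % (k:ℤ)) = y ^ l := by rw [hk]; exact zpow_mod_orderOf y l
        rw [← zpow_natCast y l', hl', Int.toNat_of_nonneg hmodnn]
        exact h1.symm
      have hlt : l' < k := by
        rw [hl']
        have := Int.emod_lt_of_pos l hk0
        omega
      have hconj' : x * y * x⁻¹ = y ^ (l' : ℕ) := by rw [hr2, hmod]
      have hl'1 : 1 ≤ l' := by
        by_contra h
        have h0 : l' = 0 := by omega
        rw [h0, pow_zero] at hconj'
        have hy1 : y = 1 := by
          have := hconj'
          group at this
          simpa using this
        have : orderOf y = 1 := by rw [hy1, orderOf_one]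
        omega
      have hone := core_rotation hval hzero hcoc hinv x y k l' hk.symm hk2 hl'1 hlt hconj' hxy
      rw [hone, pow_one] at hconj'
      calc x * y = (x * y * x⁻¹) * x := by group
        _ = y * x := by rw [hconj']
  -- generation
  have hrange : Set.range (PresentedGroup.of : Fin 2 → PG) = {x, y} := by
    ext g
    constructor
    · rintro ⟨i, rfl⟩
      fin_cases i
      · exact Or.inl rfl
      · exact Or.inr rfl
    · rintro (rfl | rfl)
      · exact ⟨0, rfl⟩
      · exact ⟨1, rfl⟩
  have hgen : ∀ a : PG, a ∈ Subgroup.closure ({x, y} : Set PG) := by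
    intro a
    rw [← hrange, PresentedGroup.closure_range_of]
    trivial
  -- conclude
  intro a b
  have base : ∀ u ∈ ({x, y} : Set PG), ∀ w ∈ ({x, y} : Set PG), Commute u w := by
    rintro u (rfl | rfl) w (rfl | rfl)
    · exact Commute.refl _
    · exact hcomm
    · exact hcomm.symm
    · exact Commute.refl _
  have key : ∀ u ∈ Subgroup.closure ({x, y} : Set PG),
      ∀ w ∈ Subgroup.closure ({x, y} : Set PG), Commute u w := by
    intro u hu w hw
    induction hu, hw using Subgroup.closure_induction₂ with
    | mem a b ha hb => exact base a ha b hb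
    | one_left a ha => exact Commute.one_left a
    | one_right a ha => exact Commute.one_right a
    | mul_left a b z ha hb hz h1 h2 => exact h1.mul_left h2
    | mul_right a b z ha hb hz h1 h2 => exact h1.mul_right h2
    | inv_left a b ha hb h1 => exact h1.inv_left
    | inv_right a b ha hb h1 => exact h1.inv_right
  exact key a (hgen a) b (hgen b)
end
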